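/- arXiv:2304.02136 — 16 statements merged into one kernel-verified Lean document; each statement's English description precedes it below -/
import Mathlib

section
/- Let μ₁, μ₂ > 0. A pair (x, y) ∈ ℝ² is an equilibrium of Kopel's model if and only if either (x, y) = (0, 0), or G₁(x) = 0 and y = μ₂·x·(1−x). -/
/-- For `μ₁, μ₂ > 0`, `(x, y)` is an equilibrium of Kopel's model iff
`(x, y) = (0, 0)`, or `G₁ x = 0` and `y = μ₂ x (1 - x)`. -/
theorem kopel_equilibrium_iff (μ₁ μ₂ : ℝ) (hμ₁ : 0 < μ₁) (hμ₂ : 0 < μ₂) (x y : ℝ) :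
    (x = μ₁ * y * (1 - y) ∧ y = μ₂ * x * (1 - x)) ↔
      ((x = 0 ∧ y = 0) ∨
        (μ₁ * μ₂ ^ 2 * x ^ 3 - 2 * μ₁ * μ₂ ^ 2 * x ^ 2
            + (μ₁ * μ₂ ^ 2 + μ₁ * μ₂) * x - μ₁ * μ₂ + 1 = 0 ∧
          y = μ₂ * x * (1 - x))) := by
  constructor
  · rintro ⟨hx, hy⟩
    subst hy
    have h : x * (μ₁ * μ₂ ^ 2 * x ^ 3 - 2 * μ₁ * μ₂ ^ 2 * x ^ 2
        + (μ₁ * μ₂ ^ 2 + μ₁ * μ₂) * x - μ₁ * μ₂ + 1) = 0 := by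
      linear_combination hx
    rcases mul_eq_zero.mp h with h0 | hG
    · exact Or.inl ⟨h0, by simp [h0]⟩
    · exact Or.inr ⟨hG, rfl⟩
  · rintro (⟨hx, hy⟩ | ⟨hG, hy⟩)
    · subst hx hy; constructor <;> ring
    · subst hy; exact ⟨by linear_combination x * hG, rfl⟩
end

section
/- Let μ₁, μ₂ > 0. Every real root x of the cubic G₁ satisfies x < 1. -/
/-- For `μ₁, μ₂ > 0`, every real root `x` of the cubic `G₁` satisfies `x < 1`. -/
theorem kopel_G1_root_lt_one (μ₁ μ₂ : ℝ) (hμ₁ : 0 < μ₁) (hμ₂ : 0 < μ₂) (x : ℝ)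
    (hx : μ₁ * μ₂ ^ 2 * x ^ 3 - 2 * μ₁ * μ₂ ^ 2 * x ^ 2
        + (μ₁ * μ₂ ^ 2 + μ₁ * μ₂) * x - μ₁ * μ₂ + 1 = 0) :
    x < 1 := by
  by_contra h
  push_neg at h
  nlinarith [sq_nonneg (x - 1),
    mul_nonneg (mul_nonneg (mul_pos hμ₁ (pow_pos hμ₂ 2)).le (by linarith : (0:ℝ) ≤ x)) (sq_nonneg (x-1)),
    mul_nonneg (mul_pos hμ₁ hμ₂).le (by linarith : (0:ℝ) ≤ x - 1)]
end

section
/- Let μ₁, μ₂ > 0. If μ₁μ₂ > 1, then every real root of G₁ is positive; if μ₁μ₂ < 1, then every real root of G₁ is negative; and if μ₁μ₂ = 1, then x = 0 is the unique real root of G₁. -/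
/-- Signs of the real roots of the cubic `G₁` according to the sign of `μ₁ μ₂ - 1`. -/
theorem kopel_G1_root_signs (μ₁ μ₂ : ℝ) (hμ₁ : 0 < μ₁) (hμ₂ : 0 < μ₂) :
    (μ₁ * μ₂ > 1 → ∀ x : ℝ,
        μ₁ * μ₂ ^ 2 * x ^ 3 - 2 * μ₁ * μ₂ ^ 2 * x ^ 2
          + (μ₁ * μ₂ ^ 2 + μ₁ * μ₂) * x - μ₁ * μ₂ + 1 = 0 → 0 < x) ∧
    (μ₁ * μ₂ < 1 → ∀ x : ℝ,
        μ₁ * μ₂ ^ 2 * x ^ 3 - 2 * μ₁ * μ₂ ^ 2 * x ^ 2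
          + (μ₁ * μ₂ ^ 2 + μ₁ * μ₂) * x - μ₁ * μ₂ + 1 = 0 → x < 0) ∧
    (μ₁ * μ₂ = 1 → ∀ x : ℝ,
        (μ₁ * μ₂ ^ 2 * x ^ 3 - 2 * μ₁ * μ₂ ^ 2 * x ^ 2
          + (μ₁ * μ₂ ^ 2 + μ₁ * μ₂) * x - μ₁ * μ₂ + 1 = 0 ↔ x = 0)) := by
  have h12 : 0 < μ₁ * μ₂ ^ 2 := by positivity
  refine ⟨?_, ?_, ?_⟩
  · intro h x hx
    by_contra hle
    push_neg at hle
    nlinarith [mul_nonneg h12.le (sq_nonneg (x - 1)), sq_nonneg (x - 1),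
      mul_nonneg (mul_nonneg h12.le (sq_nonneg (x - 1))) (neg_nonneg.mpr hle)]
  · intro h x hx
    by_contra hle
    push_neg at hle
    nlinarith [mul_nonneg (mul_nonneg h12.le (sq_nonneg (x - 1))) hle,
      mul_nonneg (mul_pos hμ₁ hμ₂).le hle]
  · intro h x
    constructor
    · intro hx
      by_contra hne
      rcases lt_or_gt_of_ne hne with hlt | hgt
      · nlinarith [mul_nonneg (mul_nonneg h12.le (sq_nonneg (x - 1))) (neg_nonneg.mpr hlt.le)]
      · nlinarith [mul_nonneg (mul_nonneg h12.le (sq_nonneg (x - 1))) hgt.le]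
    · rintro rfl; linarith
end

section
/- Let μ₁, μ₂ > 0 with μ₁μ₂ ≥ 1. Then every equilibrium (x, y) of Kopel's model lies in [0,1]×[0,1], i.e., 0 ≤ x ≤ 1 and 0 ≤ y ≤ 1. -/
/-- For `μ₁, μ₂ > 0` with `μ₁ μ₂ ≥ 1`, every equilibrium of Kopel's model lies in
`[0,1] × [0,1]`. -/
theorem kopel_equilibria_in_unit_square (μ₁ μ₂ : ℝ) (hμ₁ : 0 < μ₁) (hμ₂ : 0 < μ₂)
    (hμ : 1 ≤ μ₁ * μ₂) (x y : ℝ)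
    (hx : x = μ₁ * y * (1 - y)) (hy : y = μ₂ * x * (1 - x)) :
    (0 ≤ x ∧ x ≤ 1) ∧ (0 ≤ y ∧ y ≤ 1) := by
  have hx0 : 0 ≤ x := by
    by_contra h
    push_neg at h
    have hy0 : y < 0 := by
      nlinarith [mul_pos hμ₂ (mul_pos (neg_pos.mpr h) (by linarith : (0:ℝ) < 1 - x))]
    have h1 : x < μ₁ * y := by
      nlinarith [mul_pos hμ₁ (mul_pos (neg_pos.mpr hy0) (neg_pos.mpr hy0))]
    have h2 : y ≤ μ₂ * x := by nlinarith [sq_nonneg x]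
    have h3 : μ₁ * y ≤ μ₁ * (μ₂ * x) := by nlinarith
    have h4 : μ₁ * (μ₂ * x) ≤ x := by nlinarith
    linarith
  have hy0 : 0 ≤ y := by
    by_contra h
    push_neg at h
    have : x < 0 := by
      nlinarith [mul_pos hμ₁ (mul_pos (neg_pos.mpr h) (by linarith : (0:ℝ) < 1 - y))]
    linarith
  have hx1 : x ≤ 1 := by
    by_contra h
    push_neg at h
    have : y < 0 := by
      nlinarith [mul_pos hμ₂ (mul_pos (by linarith : (0:ℝ) < x) (by linarith : (0:ℝ) < x - 1))]
    linarith
  have hy1 : y ≤ 1 := by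
    by_contra h
    push_neg at h
    have : x < 0 := by
      nlinarith [mul_pos hμ₁ (mul_pos (by linarith : (0:ℝ) < y) (by linarith : (0:ℝ) < y - 1))]
    linarith
  exact ⟨⟨hx0, hx1⟩, ⟨hy0, hy1⟩⟩
end

section
/- Let μ₁, μ₂ > 0. The set of positive equilibria of Kopel's model has exactly three elements if and only if R₁ > 0. -/
/-- The cubic whose roots in `(0,1)` are the `x`-coordinates of positive equilibria. -/
private noncomputable def kopelF (μ₁ μ₂ : ℝ) : ℝ → ℝ := fun x =>
  μ₁*μ₂^2*x^3 - 2*μ₁*μ₂^2*x^2 + μ₁*μ₂*(1+μ₂)*x + 1 - μ₁*μ₂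

private lemma kopel_sum_eq_two (μ₁ μ₂ : ℝ) (hμ : μ₁ * μ₂ ^ 2 ≠ 0) {a b c : ℝ}
    (hab : a ≠ b) (hac : a ≠ c) (hbc : b ≠ c)
    (ha : kopelF μ₁ μ₂ a = 0) (hb : kopelF μ₁ μ₂ b = 0) (hc : kopelF μ₁ μ₂ c = 0) :
    a + b + c = 2 := by
  simp only [kopelF] at ha hb hc
  have h1 : μ₁*μ₂^2*(a^2+a*b+b^2) - 2*μ₁*μ₂^2*(a+b) + μ₁*μ₂*(1+μ₂) = 0 := by
    apply mul_left_cancel₀ (sub_ne_zero.mpr hab)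
    linear_combination ha - hb
  have h2 : μ₁*μ₂^2*(a^2+a*c+c^2) - 2*μ₁*μ₂^2*(a+c) + μ₁*μ₂*(1+μ₂) = 0 := by
    apply mul_left_cancel₀ (sub_ne_zero.mpr hac)
    linear_combination ha - hc
  have hbc' : μ₁ * μ₂ ^ 2 * (b - c) ≠ 0 := mul_ne_zero hμ (sub_ne_zero.mpr hbc)
  apply mul_left_cancel₀ hbc'
  linear_combination h1 - h2

/-- Three distinct roots of the cubic force `R₁ > 0`. -/
private lemma kopel_forward (μ₁ μ₂ : ℝ) (hμ₁ : 0 < μ₁) (hμ₂ : 0 < μ₂) {a b c : ℝ}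
    (hab : a ≠ b) (hac : a ≠ c) (hbc : b ≠ c)
    (ha : kopelF μ₁ μ₂ a = 0) (hb : kopelF μ₁ μ₂ b = 0) (hc : kopelF μ₁ μ₂ c = 0) :
    0 < μ₁ ^ 2 * μ₂ ^ 2 - 4 * μ₁ ^ 2 * μ₂ - 4 * μ₁ * μ₂ ^ 2 + 18 * μ₁ * μ₂ - 27 := by
  have hμ1 : μ₁ ≠ 0 := hμ₁.ne'
  have hμ2 : μ₂ ≠ 0 := hμ₂.ne'
  have hμ : μ₁ * μ₂ ^ 2 ≠ 0 := by positivity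
  have he1 : a + b + c = 2 := kopel_sum_eq_two μ₁ μ₂ hμ hab hac hbc ha hb hc
  simp only [kopelF] at ha hb hc
  have h1 : μ₁*μ₂^2*(a^2+a*b+b^2) - 2*μ₁*μ₂^2*(a+b) + μ₁*μ₂*(1+μ₂) = 0 := by
    apply mul_left_cancel₀ (sub_ne_zero.mpr hab)
    linear_combination ha - hb
  have he2' : μ₁*μ₂*(μ₂*(a*b+a*c+b*c)) = μ₁*μ₂*(1+μ₂) := by
    linear_combination (-1 : ℝ) * h1 + (μ₁*μ₂^2*(a+b))*he1
  have he2 : a*b+a*c+b*c = (1+μ₂)/μ₂ := by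
    rw [eq_div_iff hμ2]
    apply mul_left_cancel₀ (show μ₁*μ₂ ≠ 0 from mul_ne_zero hμ1 hμ2)
    linear_combination he2'
  have he3' : μ₁*μ₂^2*(a*b*c) = μ₁*μ₂ - 1 := by
    linear_combination hc - (μ₁*μ₂^2*c^2)*he1 + c*he2'
  have he3 : a*b*c = (μ₁*μ₂-1)/(μ₁*μ₂^2) := by
    rw [eq_div_iff hμ]
    linear_combination he3'
  have hD : ((a-b)*(a-c)*(b-c))^2 =
      (a+b+c)^2*(a*b+a*c+b*c)^2 - 4*(a*b+a*c+b*c)^3 - 4*(a+b+c)^3*(a*b*c)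
        + 18*(a+b+c)*(a*b+a*c+b*c)*(a*b*c) - 27*(a*b*c)^2 := by ring
  rw [he1, he2, he3] at hD
  have hne : (a-b)*(a-c)*(b-c) ≠ 0 :=
    mul_ne_zero (mul_ne_zero (sub_ne_zero.mpr hab) (sub_ne_zero.mpr hac)) (sub_ne_zero.mpr hbc)
  have hDpos : 0 < ((a-b)*(a-c)*(b-c))^2 :=
    lt_of_le_of_ne (sq_nonneg _) (Ne.symm (pow_ne_zero 2 hne))
  have key : μ₁ ^ 2 * μ₂ ^ 2 - 4 * μ₁ ^ 2 * μ₂ - 4 * μ₁ * μ₂ ^ 2 + 18 * μ₁ * μ₂ - 27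
      = μ₁^2*μ₂^4 * (((a-b)*(a-c)*(b-c))^2) := by
    rw [hD]
    field_simp
    ring
  rw [key]
  exact mul_pos (by positivity) hDpos

set_option maxHeartbeats 2000000 in
/-- For `μ₁, μ₂ > 0`, Kopel's model has exactly three positive equilibria iff `R₁ > 0`. -/
theorem kopel_three_positive_equilibria_iff (μ₁ μ₂ : ℝ) (hμ₁ : 0 < μ₁) (hμ₂ : 0 < μ₂) :
    ({p : ℝ × ℝ | p.1 = μ₁ * p.2 * (1 - p.2) ∧ p.2 = μ₂ * p.1 * (1 - p.1) ∧
        0 < p.1 ∧ 0 < p.2}).ncard = 3 ↔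
      0 < μ₁ ^ 2 * μ₂ ^ 2 - 4 * μ₁ ^ 2 * μ₂ - 4 * μ₁ * μ₂ ^ 2 + 18 * μ₁ * μ₂ - 27 := by
  have hμ1 : μ₁ ≠ 0 := hμ₁.ne'
  have hμ2 : μ₂ ≠ 0 := hμ₂.ne'
  set T : Set ℝ := {x : ℝ | (0 < x ∧ x < 1) ∧ kopelF μ₁ μ₂ x = 0} with hT
  have him : {p : ℝ × ℝ | p.1 = μ₁ * p.2 * (1 - p.2) ∧ p.2 = μ₂ * p.1 * (1 - p.1) ∧
      0 < p.1 ∧ 0 < p.2} = (fun x : ℝ => (x, μ₂*x*(1-x))) '' T := by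
    ext ⟨x, y⟩
    simp only [Set.mem_setOf_eq, Set.mem_image, hT, Prod.mk.injEq]
    constructor
    · rintro ⟨h1, h2, h3, h4⟩
      have hx1 : x < 1 := by nlinarith [mul_pos hμ₂ h3]
      have hfx : kopelF μ₁ μ₂ x = 0 := by
        apply mul_left_cancel₀ h3.ne'
        simp only [kopelF]
        linear_combination h1 + μ₁*(1 - y - μ₂*x*(1-x))*h2
      exact ⟨x, ⟨⟨h3, hx1⟩, hfx⟩, rfl, h2.symm⟩
    · rintro ⟨x', ⟨⟨hx0, hx1⟩, hfx⟩, rfl, rfl⟩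
      simp only [kopelF] at hfx
      refine ⟨by linear_combination x'*hfx, rfl, hx0, ?_⟩
      have : 0 < 1 - x' := by linarith
      positivity
  have hinj : Function.Injective (fun x : ℝ => (x, μ₂*x*(1-x))) :=
    fun a b h => congrArg Prod.fst h
  rw [him, Set.ncard_image_of_injective T hinj]
  constructor
  · -- forward
    intro h
    obtain ⟨a, b, c, hab, hac, hbc, hTeq⟩ := Set.ncard_eq_three.mp h
    have ha : a ∈ T := by rw [hTeq]; exact Set.mem_insert _ _
    have hb : b ∈ T := by rw [hTeq]; simp
    have hc : c ∈ T := by rw [hTeq]; simp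
    exact kopel_forward μ₁ μ₂ hμ₁ hμ₂ hab hac hbc ha.2 hb.2 hc.2
  · -- reverse
    intro hR
    have hμprod : 1 < μ₁ * μ₂ := by
      nlinarith [mul_pos hμ₁ hμ₂, mul_pos (mul_pos hμ₁ hμ₂) (add_pos hμ₁ hμ₂)]
    have h3 : 3 < μ₂ := by
      by_contra hcon
      push_neg at hcon
      have h4 : 0 < μ₂*(4-μ₂) := mul_pos hμ₂ (by linarith)
      nlinarith [mul_pos h4 hR, sq_nonneg (2*(μ₂^2-4*μ₂)*μ₁ + (18*μ₂-4*μ₂^2)),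
        mul_nonneg hμ₂.le (pow_nonneg (show (0:ℝ) ≤ 3-μ₂ by linarith) 3)]
    set t : ℝ := Real.sqrt (μ₂^2 - 3*μ₂) with htdef
    have ht2 : t^2 = μ₂^2 - 3*μ₂ := Real.sq_sqrt (by nlinarith)
    have ht0 : 0 < t := Real.sqrt_pos.mpr (by nlinarith)
    have htμ : t < μ₂ := by nlinarith [ht2, ht0, hμ₂]
    set c1 : ℝ := (2*μ₂ - t)/(3*μ₂) with hc1def
    set c2 : ℝ := (2*μ₂ + t)/(3*μ₂) with hc2def
    have hc1e : 3*μ₂*c1 = 2*μ₂ - t := by rw [hc1def]; field_simp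
    have hc2e : 3*μ₂*c2 = 2*μ₂ + t := by rw [hc2def]; field_simp
    have hc10 : 0 < c1 := div_pos (by linarith) (by linarith)
    have hc12 : c1 < c2 := by
      rw [hc1def, hc2def, div_lt_div_iff₀ (by linarith) (by linarith)]
      nlinarith
    have hc21 : c2 < 1 := by rw [hc2def, div_lt_one (by linarith)]; linarith
    have hβ : 0 < 2*μ₁*(μ₂-3)*t := by
      apply mul_pos _ ht0
      apply mul_pos (by linarith) (by linarith)
    have hprod : (27 - 9*μ₁*μ₂ + 2*μ₁*μ₂^2)^2 - (2*μ₁*(μ₂-3)*t)^2 =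
        -27*(μ₁ ^ 2 * μ₂ ^ 2 - 4 * μ₁ ^ 2 * μ₂ - 4 * μ₁ * μ₂ ^ 2 + 18 * μ₁ * μ₂ - 27) := by
      linear_combination (-4*μ₁^2*(μ₂-3)^2)*ht2
    have hN1 : 0 < (27 - 9*μ₁*μ₂ + 2*μ₁*μ₂^2) + 2*μ₁*(μ₂-3)*t := by nlinarith [hprod, hβ, hR]
    have hN2 : (27 - 9*μ₁*μ₂ + 2*μ₁*μ₂^2) - 2*μ₁*(μ₂-3)*t < 0 := by nlinarith [hprod, hβ, hR]
    have key1 : 27*μ₂^3*(kopelF μ₁ μ₂ c1) =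
        μ₂^3*((27 - 9*μ₁*μ₂ + 2*μ₁*μ₂^2) + 2*μ₁*(μ₂-3)*t) := by
      simp only [kopelF]
      linear_combination (μ₁*μ₂^2*t^2 + 9*μ₁*μ₂^3 + 2*μ₁*μ₂^3*t - 3*μ₁*μ₂^3*t*c1 + μ₁*μ₂^4
        - 12*μ₁*μ₂^4*c1 + 9*μ₁*μ₂^4*c1^2)*hc1e + (-(μ₁*μ₂^2*t))*ht2
    have key2 : 27*μ₂^3*(kopelF μ₁ μ₂ c2) =
        μ₂^3*((27 - 9*μ₁*μ₂ + 2*μ₁*μ₂^2) - 2*μ₁*(μ₂-3)*t) := by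
      simp only [kopelF]
      linear_combination (μ₁*μ₂^2*t^2 + 9*μ₁*μ₂^3 - 2*μ₁*μ₂^3*t + 3*μ₁*μ₂^3*t*c2 + μ₁*μ₂^4
        - 12*μ₁*μ₂^4*c2 + 9*μ₁*μ₂^4*c2^2)*hc2e + (μ₁*μ₂^2*t)*ht2
    have hfc1 : 0 < kopelF μ₁ μ₂ c1 := by
      have hpos : 0 < 27*μ₂^3*(kopelF μ₁ μ₂ c1) := by
        rw [key1]; exact mul_pos (pow_pos hμ₂ 3) hN1
      nlinarith [hpos, pow_pos hμ₂ 3]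
    have hfc2 : kopelF μ₁ μ₂ c2 < 0 := by
      have hneg : 27*μ₂^3*(kopelF μ₁ μ₂ c2) < 0 := by
        rw [key2]; exact mul_neg_of_pos_of_neg (pow_pos hμ₂ 3) hN2
      nlinarith [hneg, pow_pos hμ₂ 3]
    have hf0 : kopelF μ₁ μ₂ 0 < 0 := by simp only [kopelF]; nlinarith
    have hf1 : 0 < kopelF μ₁ μ₂ 1 := by
      have : kopelF μ₁ μ₂ 1 = 1 := by simp only [kopelF]; ring
      linarith
    have hcont : Continuous (kopelF μ₁ μ₂) := by unfold kopelF; fun_prop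
    obtain ⟨r₁, hr₁mem, hr₁⟩ := intermediate_value_Ioo hc10.le hcont.continuousOn ⟨hf0, hfc1⟩
    obtain ⟨r₂, hr₂mem, hr₂⟩ := intermediate_value_Ioo' hc12.le hcont.continuousOn ⟨hfc2, hfc1⟩
    obtain ⟨r₃, hr₃mem, hr₃⟩ := intermediate_value_Ioo hc21.le hcont.continuousOn ⟨hfc2, hf1⟩
    obtain ⟨hr₁0, hr₁c⟩ := hr₁mem
    obtain ⟨hr₂c, hr₂c'⟩ := hr₂mem
    obtain ⟨hr₃c, hr₃1⟩ := hr₃mem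
    have h12 : r₁ ≠ r₂ := by intro h; rw [h] at hr₁c; linarith
    have h13 : r₁ ≠ r₃ := by intro h; rw [h] at hr₁c; linarith
    have h23 : r₂ ≠ r₃ := by intro h; rw [h] at hr₂c'; linarith
    have hμ : μ₁ * μ₂ ^ 2 ≠ 0 := by positivity
    have hr₁T : r₁ ∈ T := ⟨⟨hr₁0, by linarith⟩, hr₁⟩
    have hr₂T : r₂ ∈ T := ⟨⟨by linarith, by linarith⟩, hr₂⟩
    have hr₃T : r₃ ∈ T := ⟨⟨by linarith, hr₃1⟩, hr₃⟩
    have hTeq : T = {r₁, r₂, r₃} := by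
      apply Set.Subset.antisymm
      · intro x hx
        by_contra hxmem
        simp only [Set.mem_insert_iff, Set.mem_singleton_iff, not_or] at hxmem
        obtain ⟨hx1, hx2, hx3⟩ := hxmem
        have s1 : r₁ + r₂ + r₃ = 2 := kopel_sum_eq_two μ₁ μ₂ hμ h12 h13 h23 hr₁ hr₂ hr₃
        have s2 : r₁ + r₂ + x = 2 :=
          kopel_sum_eq_two μ₁ μ₂ hμ h12 (Ne.symm hx1) (Ne.symm hx2) hr₁ hr₂ hx.2
        exact hx3 (by linarith)
      · intro x hx
        simp only [Set.mem_insert_iff, Set.mem_singleton_iff] at hx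
        rcases hx with rfl | rfl | rfl
        · exact hr₁T
        · exact hr₂T
        · exact hr₃T
    rw [hTeq]
    exact Set.ncard_eq_three.mpr ⟨r₁, r₂, r₃, h12, h13, h23, rfl⟩
end

section
/- Let μ₁, μ₂ > 0. The set of positive equilibria of Kopel's model has exactly one element if and only if either (R₁ < 0 and μ₁μ₂ > 1) or (μ₁, μ₂) = (3, 3). -/
open Set

private lemma cubic_root_exists (p q : ℝ) : ∃ t : ℝ, t^3 + p*t + q = 0 := by
  have hp := abs_nonneg p
  have hq := abs_nonneg q
  have hT0 : (0:ℝ) ≤ 1 + |p| + |q| := by linarith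
  have hmul1 : -|p| * (1 + |p| + |q|) ≤ p * (1 + |p| + |q|) :=
    mul_le_mul_of_nonneg_right (neg_abs_le p) hT0
  have hmul2 : p * (-(1 + |p| + |q|)) ≤ |p| * (1 + |p| + |q|) := by
    have := mul_le_mul_of_nonneg_right (le_abs_self p) hT0
    nlinarith
  have hgb : (1 + |p| + |q|)^3 + p*(1 + |p| + |q|) + q > 0 := by
    nlinarith [neg_abs_le q, mul_nonneg hp hq, sq_nonneg (|p| + |q|),
      mul_nonneg (mul_nonneg hp hp) hq, mul_nonneg (mul_nonneg hq hq) hp,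
      mul_nonneg (mul_nonneg hp hp) hp, mul_nonneg (mul_nonneg hq hq) hq]
  have hga : (-(1 + |p| + |q|))^3 + p*(-(1 + |p| + |q|)) + q < 0 := by
    nlinarith [le_abs_self q, mul_nonneg hp hq, sq_nonneg (|p| + |q|),
      mul_nonneg (mul_nonneg hp hp) hq, mul_nonneg (mul_nonneg hq hq) hp,
      mul_nonneg (mul_nonneg hp hp) hp, mul_nonneg (mul_nonneg hq hq) hq]
  have hle : (-(1 + |p| + |q|) : ℝ) ≤ 1 + |p| + |q| := by linarith
  have hcont : ContinuousOn (fun t : ℝ => t^3 + p*t + q)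
      (Icc (-(1 + |p| + |q|)) (1 + |p| + |q|)) := by fun_prop
  obtain ⟨t, _, ht⟩ := intermediate_value_Icc hle hcont ⟨le_of_lt hga, le_of_lt hgb⟩
  exact ⟨t, ht⟩

private lemma cubic_two_roots (p q : ℝ) (hD : 4*p^3 + 27*q^2 ≤ 0) (hpq : ¬(p = 0 ∧ q = 0)) :
    ∃ t1 t2 : ℝ, t1 ≠ t2 ∧ t1^3 + p*t1 + q = 0 ∧ t2^3 + p*t2 + q = 0 := by
  have hp : p < 0 := by
    rcases lt_trichotomy p 0 with h|h|h
    · exact h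
    · exfalso; apply hpq; subst h
      refine ⟨rfl, by nlinarith [sq_nonneg q]⟩
    · exfalso; nlinarith [pow_pos h 3, sq_nonneg q]
  set m := Real.sqrt (-p/3) with hm
  have hm0 : 0 < m := Real.sqrt_pos.2 (by linarith)
  have hm2 : m^2 = -p/3 := Real.sq_sqrt (by linarith)
  have hpm : p = -3*m^2 := by linarith
  have hp3 : p^3 = -27*m^6 := by rw [hpm]; ring
  have hq2 : q^2 ≤ 4*m^6 := by nlinarith
  have hm3 : 0 < m^3 := pow_pos hm0 3
  have hqu : q ≤ 2*m^3 := by nlinarith [sq_nonneg (q - 2*m^3), sq_nonneg (q + 2*m^3)]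
  have hql : -(2*m^3) ≤ q := by nlinarith [sq_nonneg (q - 2*m^3), sq_nonneg (q + 2*m^3)]
  have hcont : ∀ a b : ℝ, ContinuousOn (fun t : ℝ => t^3 + p*t + q) (Icc a b) := by
    intro a b; fun_prop
  obtain ⟨t1, ht1m, ht1⟩ := intermediate_value_Icc (by linarith : (-(2*m):ℝ) ≤ -m)
    (hcont _ _) ⟨by show (-(2*m))^3 + p*(-(2*m)) + q ≤ 0; rw [hpm]; nlinarith,
                 by show (0:ℝ) ≤ (-m)^3 + p*(-m) + q; rw [hpm]; nlinarith⟩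
  obtain ⟨t2, ht2m, ht2⟩ := intermediate_value_Icc (by linarith : (m:ℝ) ≤ 2*m)
    (hcont _ _) ⟨by show m^3 + p*m + q ≤ 0; rw [hpm]; nlinarith,
                 by show (0:ℝ) ≤ (2*m)^3 + p*(2*m) + q; rw [hpm]; nlinarith⟩
  refine ⟨t1, t2, ?_, ht1, ht2⟩
  have h1 := ht1m.2
  have h2 := ht2m.1
  intro h; subst h; linarith

private lemma cubic_ncard_one' (p q : ℝ) :
    ({t : ℝ | t^3 + p*t + q = 0}).ncard = 1 ↔ (0 < 4*p^3 + 27*q^2 ∨ (p = 0 ∧ q = 0)) := by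
  constructor
  · intro h
    by_contra hcon
    push_neg at hcon
    obtain ⟨hD, hpq⟩ := hcon
    obtain ⟨t1, t2, hne, h1, h2⟩ := cubic_two_roots p q hD (by tauto)
    obtain ⟨a, ha⟩ := Set.ncard_eq_one.mp h
    have e1 : t1 ∈ ({t : ℝ | t^3 + p*t + q = 0}) := h1
    have e2 : t2 ∈ ({t : ℝ | t^3 + p*t + q = 0}) := h2
    rw [ha] at e1 e2
    exact hne (e1.trans e2.symm)
  · rintro (hD | ⟨hp, hq⟩)
    · obtain ⟨r, hr⟩ := cubic_root_exists p q
      rw [Set.ncard_eq_one]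
      refine ⟨r, ?_⟩
      ext t
      simp only [mem_setOf_eq, mem_singleton_iff]
      constructor
      · intro ht
        by_contra hne
        have h1 : (t - r) * (t^2 + t*r + r^2 + p) = 0 := by linear_combination ht - hr
        have h2 : t^2 + t*r + r^2 + p = 0 :=
          (mul_eq_zero.mp h1).resolve_left (sub_ne_zero.mpr hne)
        have hp' : p = -(t^2 + t*r + r^2) := by linarith
        have hq' : q = t^2*r + t*r^2 := by linear_combination ht - t*h2
        have hid : 4*p^3 + 27*q^2 = -((t - r)*(2*t + r)*(t + 2*r))^2 := by
          rw [hp', hq']; ring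
        nlinarith [sq_nonneg ((t - r)*(2*t + r)*(t + 2*r))]
      · intro h; rw [h]; exact hr
    · subst hp; subst hq
      rw [Set.ncard_eq_one]
      refine ⟨0, ?_⟩
      ext t
      simp only [mem_setOf_eq, mem_singleton_iff, mul_zero, add_zero, zero_mul]
      constructor
      · intro h
        have h3 : t^3 = 0 := by linarith
        exact pow_eq_zero_iff (by norm_num : (3:ℕ) ≠ 0) |>.mp h3
      · intro h; rw [h]; ring

private lemma kopel_set_eq' (μ₁ μ₂ : ℝ) (hμ₁ : 0 < μ₁) (hμ₂ : 0 < μ₂) (hc : 1 < μ₁ * μ₂) :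
    {p : ℝ × ℝ | p.1 = μ₁ * p.2 * (1 - p.2) ∧ p.2 = μ₂ * p.1 * (1 - p.1) ∧
        0 < p.1 ∧ 0 < p.2} =
      (fun t : ℝ => (t + 2/3, μ₂ * (t + 2/3) * (1 - (t + 2/3)))) ''
        {t : ℝ | t^3 + ((3 - μ₂)/(3*μ₂))*t
          + ((2*μ₁*μ₂^2 - 9*μ₁*μ₂ + 27)/(27*μ₁*μ₂^2)) = 0} := by
  have hμ₁' : μ₁ ≠ 0 := ne_of_gt hμ₁
  have hμ₂' : μ₂ ≠ 0 := ne_of_gt hμ₂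
  have hne : (-(μ₁*μ₂^2)) ≠ 0 := by
    intro h; apply hμ₁'; nlinarith [sq_nonneg μ₂]
  have hid : ∀ x : ℝ, μ₁*μ₂*(1-x)*(1-μ₂*x*(1-x)) - 1
      = (-(μ₁*μ₂^2)) * ((x - 2/3)^3 + ((3 - μ₂)/(3*μ₂))*(x - 2/3)
        + ((2*μ₁*μ₂^2 - 9*μ₁*μ₂ + 27)/(27*μ₁*μ₂^2))) := by
    intro x; field_simp; ring
  ext ⟨x, y⟩
  simp only [mem_setOf_eq, mem_image, Prod.mk.injEq]
  constructor
  · rintro ⟨h1, h2, hx, hy⟩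
    have hy1 : y < 1 := by
      by_contra h
      push_neg at h
      have h5 : μ₁ * y * (1 - y) ≤ 0 :=
        mul_nonpos_of_nonneg_of_nonpos (mul_pos hμ₁ hy).le (by linarith)
      linarith [h1 ▸ h5]
    have hx1 : x < 1 := by
      by_contra h
      push_neg at h
      have h5 : μ₂ * x * (1 - x) ≤ 0 :=
        mul_nonpos_of_nonneg_of_nonpos (mul_pos hμ₂ hx).le (by linarith)
      linarith [h2 ▸ h5]
    have hQ : μ₁*μ₂*(1-x)*(1-μ₂*x*(1-x)) = 1 := by
      have h3 : x * (μ₁*μ₂*(1-x)*(1-μ₂*x*(1-x)) - 1) = 0 := by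
        rw [h2] at h1; linear_combination -h1
      have h4 := (mul_eq_zero.mp h3).resolve_left (ne_of_gt hx)
      linarith
    refine ⟨x - 2/3, ?_, by ring, by rw [h2]; ring⟩
    have h5 := hid x
    rw [hQ] at h5
    have h6 : (-(μ₁*μ₂^2)) * ((x - 2/3)^3 + ((3 - μ₂)/(3*μ₂))*(x - 2/3)
        + ((2*μ₁*μ₂^2 - 9*μ₁*μ₂ + 27)/(27*μ₁*μ₂^2))) = 0 := by linarith
    have h7 := (mul_eq_zero.mp h6).resolve_left hne
    show (x - 2/3)^3 + ((3 - μ₂)/(3*μ₂))*(x - 2/3)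
        + ((2*μ₁*μ₂^2 - 9*μ₁*μ₂ + 27)/(27*μ₁*μ₂^2)) = 0
    linear_combination h7
  · rintro ⟨t, ht, hxx, hyy⟩
    have ht' : (t:ℝ)^3 + ((3 - μ₂)/(3*μ₂))*t
        + ((2*μ₁*μ₂^2 - 9*μ₁*μ₂ + 27)/(27*μ₁*μ₂^2)) = 0 := ht
    have hQ : μ₁*μ₂*(1-(t+2/3))*(1-μ₂*(t+2/3)*(1-(t+2/3))) = 1 := by
      have h5 := hid (t + 2/3)
      have h6 : ((t+2/3) - 2/3)^3 + ((3 - μ₂)/(3*μ₂))*((t+2/3) - 2/3)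
          + ((2*μ₁*μ₂^2 - 9*μ₁*μ₂ + 27)/(27*μ₁*μ₂^2)) = 0 := by
        linear_combination ht'
      rw [h6, mul_zero] at h5
      linarith
    have hx0 : 0 < t + 2/3 := by
      by_contra h
      push_neg at h
      nlinarith [mul_pos hμ₁ hμ₂, sq_nonneg (t + 2/3),
        mul_nonneg hμ₂.le (sq_nonneg (t + 2/3)),
        mul_nonneg (mul_pos hμ₁ hμ₂).le (neg_nonneg.mpr h),
        mul_nonneg (mul_nonneg (mul_pos hμ₁ hμ₂).le (neg_nonneg.mpr h))
          (mul_nonneg hμ₂.le (sq_nonneg (t + 2/3))),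
        mul_nonneg (mul_pos hμ₁ hμ₂).le (mul_nonneg hμ₂.le (sq_nonneg (t + 2/3))),
        mul_nonneg (mul_nonneg (mul_pos hμ₁ hμ₂).le (neg_nonneg.mpr h)) hμ₂.le]
    have hx1 : t + 2/3 < 1 := by
      by_contra h
      push_neg at h
      have hA : μ₁ * μ₂ * (1 - (t + 2/3)) ≤ 0 :=
        mul_nonpos_of_nonneg_of_nonpos (mul_pos hμ₁ hμ₂).le (by linarith)
      have hB : 0 ≤ 1 - μ₂ * (t + 2/3) * (1 - (t + 2/3)) := by
        nlinarith [mul_nonneg (mul_nonneg hμ₂.le (by linarith : (0:ℝ) ≤ t + 2/3))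
          (by linarith : (0:ℝ) ≤ (t + 2/3) - 1)]
      nlinarith [mul_nonpos_of_nonpos_of_nonneg hA hB]
    subst hxx; subst hyy
    refine ⟨?_, rfl, hx0, mul_pos (mul_pos hμ₂ hx0) (by linarith)⟩
    linear_combination (-(t + 2/3)) * hQ

/-- For `μ₁, μ₂ > 0`, Kopel's model has exactly one positive equilibrium iff
(`R₁ < 0` and `μ₁ μ₂ > 1`) or `(μ₁, μ₂) = (3, 3)`. -/
theorem kopel_one_positive_equilibrium_iff (μ₁ μ₂ : ℝ) (hμ₁ : 0 < μ₁) (hμ₂ : 0 < μ₂) :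
    ({p : ℝ × ℝ | p.1 = μ₁ * p.2 * (1 - p.2) ∧ p.2 = μ₂ * p.1 * (1 - p.1) ∧
        0 < p.1 ∧ 0 < p.2}).ncard = 1 ↔
      ((μ₁ ^ 2 * μ₂ ^ 2 - 4 * μ₁ ^ 2 * μ₂ - 4 * μ₁ * μ₂ ^ 2 + 18 * μ₁ * μ₂ - 27 < 0 ∧
          1 < μ₁ * μ₂) ∨ (μ₁ = 3 ∧ μ₂ = 3)) := by
  have hμ₁' : μ₁ ≠ 0 := ne_of_gt hμ₁
  have hμ₂' : μ₂ ≠ 0 := ne_of_gt hμ₂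
  by_cases hc : 1 < μ₁ * μ₂
  · rw [kopel_set_eq' μ₁ μ₂ hμ₁ hμ₂ hc]
    have hinj : Function.Injective
        (fun t : ℝ => (t + 2/3, μ₂ * (t + 2/3) * (1 - (t + 2/3)))) := by
      intro a b h
      have := congrArg Prod.fst h
      simpa using this
    rw [Set.ncard_image_of_injective _ hinj, cubic_ncard_one']
    set pp := (3 - μ₂)/(3*μ₂) with hpp
    set qq := (2*μ₁*μ₂^2 - 9*μ₁*μ₂ + 27)/(27*μ₁*μ₂^2) with hqq
    have hDR : (4*pp^3 + 27*qq^2) * (μ₁^2*μ₂^4)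
        = -(μ₁ ^ 2 * μ₂ ^ 2 - 4 * μ₁ ^ 2 * μ₂ - 4 * μ₁ * μ₂ ^ 2 + 18 * μ₁ * μ₂ - 27) := by
      rw [hpp, hqq]; field_simp; ring
    have hpos : (0:ℝ) < μ₁^2*μ₂^4 := by positivity
    constructor
    · rintro (hD | ⟨hp0, hq0⟩)
      · left
        refine ⟨?_, hc⟩
        nlinarith [mul_pos hD hpos]
      · right
        have h2 : μ₂ = 3 := by
          rcases div_eq_zero_iff.mp hp0 with h | h
          · linarith
          · exact absurd h (by positivity)
        have h1 : μ₁ = 3 := by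
          rcases div_eq_zero_iff.mp hq0 with h | h
          · rw [h2] at h; linarith
          · exact absurd h (by positivity)
        exact ⟨h1, h2⟩
    · rintro (⟨hR, -⟩ | ⟨h1, h2⟩)
      · left
        nlinarith [hDR, hpos]
      · right
        subst h1; subst h2
        constructor
        · rw [hpp]; norm_num
        · rw [hqq]; norm_num
  · -- μ₁ μ₂ ≤ 1 : no positive equilibria
    push_neg at hc
    have hS : {p : ℝ × ℝ | p.1 = μ₁ * p.2 * (1 - p.2) ∧ p.2 = μ₂ * p.1 * (1 - p.1) ∧
        0 < p.1 ∧ 0 < p.2} = ∅ := by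
      ext ⟨x, y⟩
      simp only [mem_setOf_eq, mem_empty_iff_false, iff_false]
      rintro ⟨h1, h2, hx, hy⟩
      have hy1 : y < 1 := by
        by_contra h
        push_neg at h
        have h5 : μ₁ * y * (1 - y) ≤ 0 :=
          mul_nonpos_of_nonneg_of_nonpos (mul_pos hμ₁ hy).le (by linarith)
        linarith [h1 ▸ h5]
      have hx1 : x < 1 := by
        by_contra h
        push_neg at h
        have h5 : μ₂ * x * (1 - x) ≤ 0 :=
          mul_nonpos_of_nonneg_of_nonpos (mul_pos hμ₂ hx).le (by linarith)
        linarith [h2 ▸ h5]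
      -- x = μ₁ y (1-y) < μ₁ y ; y = μ₂ x (1-x) < μ₂ x ; so x < μ₁ μ₂ x ≤ x
      have hA : x < μ₁ * y := by nlinarith [mul_pos (mul_pos hμ₁ hy) hy]
      have hB : y < μ₂ * x := by nlinarith [mul_pos (mul_pos hμ₂ hx) hx]
      nlinarith [mul_lt_mul_of_pos_left hB hμ₁, mul_le_mul_of_nonneg_right hc hx.le]
    rw [hS, Set.ncard_empty]
    constructor
    · intro h; exact absurd h (by norm_num)
    · rintro (⟨-, h⟩ | ⟨h1, h2⟩)
      · exact absurd h (by linarith)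
      · exfalso; rw [h1, h2] at hc; norm_num at hc
end

section
/- For μ₁ = μ₂ = 3, the set of positive equilibria of Kopel's model is exactly the singleton {(2/3, 2/3)}. -/
/-- For `μ₁ = μ₂ = 3`, the set of positive equilibria of Kopel's model is exactly
`{(2/3, 2/3)}`. -/
theorem kopel_positive_equilibria_at_three :
    {p : ℝ × ℝ | p.1 = 3 * p.2 * (1 - p.2) ∧ p.2 = 3 * p.1 * (1 - p.1) ∧
        0 < p.1 ∧ 0 < p.2} = {((2 : ℝ) / 3, (2 : ℝ) / 3)} := by
  ext p
  simp only [Set.mem_setOf_eq, Set.mem_singleton_iff]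
  constructor
  · rintro ⟨h1, h2, hx, hy⟩
    have key : p.1 * (3 * p.1 - 2)^3 = 0 := by
      linear_combination h1 - (3 * p.2 + 9 * p.1 - 9 * p.1^2 - 3) * h2
    have h3 : (3 * p.1 - 2)^3 = 0 := by
      rcases mul_eq_zero.mp key with h | h
      · exact absurd h hx.ne'
      · exact h
    have hx2 : p.1 = 2 / 3 := by
      have := pow_eq_zero_iff (n := 3) (by norm_num) |>.mp h3
      linarith
    have hy2 : p.2 = 2 / 3 := by rw [hx2] at h2; linarith
    exact Prod.ext hx2 hy2
  · rintro rfl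
    norm_num
end

section
/- Let ρ₁, ρ₂ ∈ (0,1] and μ₁, μ₂ > 0 satisfy 1 − (ρ₁ + ρ₂)/(ρ₁ρ₂) < μ₁μ₂ < 1. Then the zero equilibrium E₀ = (0,0) of Kopel's model is stable: every complex eigenvalue λ of the Jacobian matrix J(0,0), which has rows (1−ρ₁, ρ₁μ₁) and (ρ₂μ₂, 1−ρ₂), satisfies |λ| < 1. -/
/-!
The Jacobian `J` at the origin has trace `t = 2 - ρ₁ - ρ₂` and determinant
`d = (1 - ρ₁)(1 - ρ₂) - ρ₁ρ₂μ₁μ₂`, so its eigenvalues are the roots of `z² - t z + d`.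
By the Jury (Schur–Cohn) criterion these lie in the open unit disc as soon as
`|t| < 1 + d` and `d < 1`. Here `1 + d - t = ρ₁ρ₂(1 - μ₁μ₂)`, `1 + d + t = (2 - ρ₁)(2 - ρ₂) - ρ₁ρ₂μ₁μ₂`,
and `d < 1` is the lower bound on `μ₁μ₂` multiplied by `ρ₁ρ₂`.
-/

theorem Matrix.sq_sub_trace_mul_add_det_eq_zero_of_mem_spectrum {K : Type*} [Field K]
    (M : Matrix (Fin 2) (Fin 2) K) {z : K} (hz : z ∈ spectrum K M) :
    z ^ 2 - M.trace * z + M.det = 0 := by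
  simpa [M.charpoly_fin_two] using (Matrix.mem_spectrum_iff_isRoot_charpoly.mp hz).eq_zero

theorem abs_lt_one_of_sq_sub_mul_add_eq_zero {t d a : ℝ} (h : a ^ 2 - t * a + d = 0)
    (ht : |t| < 1 + d) (hd : d < 1) : |a| < 1 := by
  obtain ⟨ht₁, ht₂⟩ := abs_lt.mp ht
  -- `a² - t a + d = (a ∓ 1)(a ± 1 - t) + (1 ∓ t + d)`, which is positive for `±a ≥ 1`.
  refine abs_lt.mpr ⟨?_, ?_⟩
  · by_contra! ha
    nlinarith [mul_nonneg (neg_nonneg.mpr (by linarith : a + 1 ≤ 0))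
      (neg_nonneg.mpr (by linarith : a - 1 - t ≤ 0))]
  · by_contra! ha
    nlinarith [mul_nonneg (by linarith : 0 ≤ a - 1) (by linarith : 0 ≤ a + 1 - t)]

theorem Complex.norm_lt_one_of_sq_sub_mul_add_eq_zero {t d : ℝ} {z : ℂ}
    (h : z ^ 2 - t * z + d = 0) (ht : |t| < 1 + d) (hd : d < 1) : ‖z‖ < 1 := by
  have hre : z.re ^ 2 - z.im ^ 2 - t * z.re + d = 0 := by
    simpa [sq] using congrArg Complex.re h
  have him : z.im * (2 * z.re - t) = 0 := by
    have := congrArg Complex.im h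
    simp only [sq, sub_im, add_im, mul_im, ofReal_re, ofReal_im, zero_im] at this
    linarith
  rcases mul_eq_zero.mp him with hreal | hconj
  · have hz : z = z.re := Complex.ext rfl (by simpa using hreal)
    rw [hz, Complex.norm_real, Real.norm_eq_abs]
    exact abs_lt_one_of_sq_sub_mul_add_eq_zero (by simpa [hreal] using hre) ht hd
  · -- a non-real root has real part `t / 2`, and then `‖z‖² = z * conj z = d`
    have hnorm : ‖z‖ ^ 2 = d := by
      rw [Complex.sq_norm, Complex.normSq_apply]
      linear_combination -hre + z.re * hconj
    nlinarith [norm_nonneg z]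

theorem Matrix.norm_lt_one_of_mem_spectrum_of_abs_trace_lt (M : Matrix (Fin 2) (Fin 2) ℂ)
    {t d : ℝ} (htr : M.trace = t) (hdet : M.det = d) (ht : |t| < 1 + d) (hd : d < 1) :
    ∀ z ∈ spectrum ℂ M, ‖z‖ < 1 := fun _ hz =>
  Complex.norm_lt_one_of_sq_sub_mul_add_eq_zero
    (htr ▸ hdet ▸ M.sq_sub_trace_mul_add_det_eq_zero_of_mem_spectrum hz) ht hd

theorem kopel_E0_stable_general (ρ₁ ρ₂ μ₁ μ₂ : ℝ)
    (hρ₁ : ρ₁ ∈ Set.Ioc (0 : ℝ) 1) (hρ₂ : ρ₂ ∈ Set.Ioc (0 : ℝ) 1)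
    (hlo : 1 - (ρ₁ + ρ₂) / (ρ₁ * ρ₂) < μ₁ * μ₂) (hhi : μ₁ * μ₂ < 1) :
    ∀ lam ∈ spectrum ℂ
      (!![((1 - ρ₁ : ℝ) : ℂ), ((ρ₁ * μ₁ : ℝ) : ℂ);
          ((ρ₂ * μ₂ : ℝ) : ℂ), ((1 - ρ₂ : ℝ) : ℂ)] : Matrix (Fin 2) (Fin 2) ℂ),
      ‖lam‖ < 1 := by
  obtain ⟨hρ₁0, hρ₁1⟩ := hρ₁
  obtain ⟨hρ₂0, hρ₂1⟩ := hρ₂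
  have hρ : 0 < ρ₁ * ρ₂ := mul_pos hρ₁0 hρ₂0
  have hdet_lt : (1 - ρ₁) * (1 - ρ₂) - ρ₁ * μ₁ * (ρ₂ * μ₂) < 1 := by
    rw [sub_lt_iff_lt_add, add_div' _ _ _ hρ.ne', lt_div_iff₀ hρ] at hlo
    nlinarith
  refine Matrix.norm_lt_one_of_mem_spectrum_of_abs_trace_lt _ (t := 2 - ρ₁ - ρ₂)
    (d := (1 - ρ₁) * (1 - ρ₂) - ρ₁ * μ₁ * (ρ₂ * μ₂)) ?_ ?_ ?_ hdet_lt
  · simp only [Matrix.trace_fin_two_of]; push_cast; ring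
  · simp only [Matrix.det_fin_two_of]; push_cast; ring
  · refine abs_lt.mpr ⟨?_, ?_⟩
    · nlinarith [mul_le_mul hρ₁1 hρ₂1 hρ₂0.le zero_le_one]
    · nlinarith

/-- Stability of the zero equilibrium `E₀ = (0,0)` of Kopel's model:
if `1 - (ρ₁ + ρ₂)/(ρ₁ ρ₂) < μ₁ μ₂ < 1`, then all complex eigenvalues of the
Jacobian at the origin have modulus less than 1. -/
theorem kopel_E0_stable (ρ₁ ρ₂ μ₁ μ₂ : ℝ)
    (hρ₁ : ρ₁ ∈ Set.Ioc (0 : ℝ) 1) (hρ₂ : ρ₂ ∈ Set.Ioc (0 : ℝ) 1)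
    (hμ₁ : 0 < μ₁) (hμ₂ : 0 < μ₂)
    (hlo : 1 - (ρ₁ + ρ₂) / (ρ₁ * ρ₂) < μ₁ * μ₂) (hhi : μ₁ * μ₂ < 1) :
    ∀ lam ∈ spectrum ℂ
      (!![((1 - ρ₁ : ℝ) : ℂ), ((ρ₁ * μ₁ : ℝ) : ℂ);
          ((ρ₂ * μ₂ : ℝ) : ℂ), ((1 - ρ₂ : ℝ) : ℂ)] : Matrix (Fin 2) (Fin 2) ℂ),
      ‖lam‖ < 1 :=
  kopel_E0_stable_general ρ₁ ρ₂ μ₁ μ₂ hρ₁ hρ₂ hlo hhi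
end

section
/- Let μ₁, μ₂ > 0 and let (x, y) be a positive equilibrium of Kopel's model. If μ₁μ₂·(1−2x)·(1−2y) = 1 (equivalently, the first Jury quantity CP(1) = 1 − Tr(J) + Det(J) vanishes at this equilibrium for any ρ₁, ρ₂ ∈ (0,1]), then μ₁μ₂ = 1 or R₁ = 0. -/
/-- At a positive equilibrium of Kopel's model, if `μ₁ μ₂ (1-2x)(1-2y) = 1`
(vanishing of the first Jury quantity), then `μ₁ μ₂ = 1` or `R₁ = 0`. -/
theorem kopel_jury1_vanishing (μ₁ μ₂ x y : ℝ) (hμ₁ : 0 < μ₁) (hμ₂ : 0 < μ₂)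
    (hx : x = μ₁ * y * (1 - y)) (hy : y = μ₂ * x * (1 - x))
    (hxpos : 0 < x) (hypos : 0 < y)
    (h : μ₁ * μ₂ * (1 - 2 * x) * (1 - 2 * y) = 1) :
    μ₁ * μ₂ = 1 ∨
      μ₁ ^ 2 * μ₂ ^ 2 - 4 * μ₁ ^ 2 * μ₂ - 4 * μ₁ * μ₂ ^ 2 + 18 * μ₁ * μ₂ - 27 = 0 := by
  right
  have hm : (0:ℝ) < μ₁ * μ₂ := mul_pos hμ₁ hμ₂
  have hp : (0:ℝ) < x * y := mul_pos hxpos hypos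
  have hp0 : x * y ≠ 0 := ne_of_gt hp
  -- e1, e2: cross relations
  have e1 : μ₂ * x = μ₁ * μ₂ * (y - y ^ 2) := by linear_combination μ₂ * hx
  have e2 : μ₁ * y = μ₁ * μ₂ * (x - x ^ 2) := by linear_combination μ₁ * hy
  -- product relation : μ₁μ₂ (1-x)(1-y) = 1
  have h0 : μ₁ * μ₂ * (x * y) * (μ₁ * μ₂ * (1 - x) * (1 - y) - 1) = 0 := by
    linear_combination (-(μ₁ * y)) * e1 - (μ₁ * μ₂ * (y - y ^ 2)) * e2
  have key1 : μ₁ * μ₂ * (1 - x) * (1 - y) = 1 := by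
    have := mul_eq_zero.mp h0
    rcases this with h1 | h1
    · exact absurd h1 (by positivity)
    · linarith
  -- x + y = 3xy
  have hsum : x + y = 3 * (x * y) := by
    have h2 : μ₁ * μ₂ * ((x + y) - 3 * (x * y)) = 0 := by linear_combination key1 - h
    have := mul_eq_zero.mp h2
    rcases this with h1 | h1
    · exact absurd h1 (ne_of_gt hm)
    · linarith
  -- sum relation
  have C : (μ₁ + μ₂) * (x * y * ((1 - x) * (1 - y))) = x ^ 2 * (1 - x) + y ^ 2 * (1 - y) := by
    linear_combination (-(x * (1 - x))) * hx + (-(y * (1 - y))) * hy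
  have D0 : (μ₁ + μ₂) * (x * y) = μ₁ * μ₂ * (x ^ 2 * (1 - x) + y ^ 2 * (1 - y)) := by
    linear_combination (μ₁ * μ₂) * C - ((μ₁ + μ₂) * (x * y)) * key1
  have hN : x ^ 2 * (1 - x) + y ^ 2 * (1 - y)
      = 18 * (x * y) ^ 2 - 2 * (x * y) - 27 * (x * y) ^ 3 := by
    linear_combination (x + y + 6 * (x * y) - (x + y) ^ 2 - 3 * (x * y) * (x + y)
      - 9 * (x * y) ^ 2) * hsum
  have D' : (μ₁ + μ₂) * (x * y)
      = μ₁ * μ₂ * (18 * (x * y) ^ 2 - 2 * (x * y) - 27 * (x * y) ^ 3) := by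
    linear_combination D0 + (μ₁ * μ₂) * hN
  have hm1 : μ₁ * μ₂ * (1 - 2 * (x * y)) = 1 := by
    linear_combination key1 + (μ₁ * μ₂) * hsum
  have key : ((μ₁ * μ₂) ^ 2 - 4 * (μ₁ * μ₂) * (μ₁ + μ₂) + 18 * (μ₁ * μ₂) - 27)
      * (x * y) ^ 2 = 0 := by
    linear_combination (-4 * (μ₁ * μ₂) * (x * y)) * D'
      + (9 * (x * y) ^ 2 * (μ₁ * μ₂ - 6 * (μ₁ * μ₂) * (x * y) + 3)) * hm1
  have hfac : (μ₁ * μ₂) ^ 2 - 4 * (μ₁ * μ₂) * (μ₁ + μ₂) + 18 * (μ₁ * μ₂) - 27 = 0 := by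
    rcases mul_eq_zero.mp key with h1 | h1
    · exact h1
    · exact absurd h1 (pow_ne_zero 2 hp0)
  linear_combination hfac
end

section
/- Let ρ₁ = ρ₂ = 1 and μ₁, μ₂ > 0. If either (μ₁μ₂ > 1, R₁ < 0, and S₃ > 0) or (μ₁μ₂ > 1, R₁ > 0, and S₃ < 0), then the set of stable positive equilibria of Kopel's model has exactly one element, where a positive equilibrium (x,y) is stable if every complex eigenvalue λ of the Jacobian matrix J(x,y), which (for ρ₁ = ρ₂ = 1) has rows (0, μ₁(1−2y)) and (μ₂(1−2x), 0), satisfies |λ| < 1. -/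
/-!
Writing `y = μ₂ x (1 - x)`, the positive equilibria are the points `(x, μ₂ x (1 - x))` with `x` a
root of the cubic `G x = μ₁ μ₂ (1 - x) (1 - μ₂ x (1 - x)) - 1`, and when `μ₁ μ₂ > 1` every root of
`G` lies in `(0, 1)`. The Jacobian is antidiagonal, so its eigenvalues square to the product of its
entries, which is the derivative of `x ↦ f₁ (f₂ x) = x (1 + G x)`; at a root this is `1 + x G' x`,
so the equilibrium is stable iff `G' x < 0` and `2 + x G' x > 0`.

Fix a real root `r` and write `G x = -μ₁ μ₂² (x - r) q x` with `q` a monic quadratic of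
discriminant `Δ`. Then `Δ G'(r)² = R₁`, and the product of `2 + x G' x` over the three roots of `G`
is `S₃`. If `R₁ < 0`, then `q > 0`, so `r` is the only root and `G' r < 0`; the factor contributed
by the two complex roots is a norm, hence `S₃ > 0` gives `2 + r G' r > 0`. If `R₁ > 0`, the roots are
real, `u < w < v`; `G'` is negative at `u`, `v` and positive at `w`, so `w` is unstable,
`2 + w G' w > 0`, and `S₃ < 0` leaves exactly one of `u`, `v` with `2 + x G' x > 0`.
-/

theorem mem_spectrum_antidiag_iff {b c z : ℂ} :
    z ∈ spectrum ℂ !![0, b; c, 0] ↔ z ^ 2 = b * c := by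
  rw [spectrum.mem_iff, Matrix.isUnit_iff_isUnit_det, isUnit_iff_ne_zero, not_not]
  simp only [Matrix.algebraMap_eq_diagonal, Matrix.det_fin_two, Matrix.sub_apply,
    Matrix.diagonal_apply_eq, Matrix.diagonal_apply_ne, Pi.algebraMap_apply,
    Algebra.algebraMap_self, RingHom.id_apply, Matrix.of_apply, Matrix.cons_val', Matrix.cons_val_zero, Matrix.cons_val_one,
    Matrix.cons_val_fin_one, ne_eq, zero_ne_one, one_ne_zero, not_false_eq_true, sub_zero, zero_sub,
    mul_neg, neg_mul, neg_neg]
  constructor <;> intro h <;> linear_combination h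

theorem forall_mem_spectrum_antidiag_norm_lt_one_iff (b c : ℂ) :
    (∀ z ∈ spectrum ℂ !![0, b; c, 0], ‖z‖ < 1) ↔ ‖b * c‖ < 1 := by
  have hnorm : ∀ z : ℂ, z ^ 2 = b * c → ‖b * c‖ = ‖z‖ ^ 2 := by
    rintro z hz; rw [← hz, norm_pow]
  constructor
  · intro h
    obtain ⟨z, hz⟩ := IsAlgClosed.exists_pow_nat_eq (b * c) two_pos
    have := h z (mem_spectrum_antidiag_iff.2 hz)
    rwa [hnorm z hz, pow_lt_one_iff_of_nonneg (norm_nonneg z) two_ne_zero]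
  · intro h z hz
    rwa [hnorm z (mem_spectrum_antidiag_iff.1 hz),
      pow_lt_one_iff_of_nonneg (norm_nonneg z) two_ne_zero] at h

lemma quadratic_form_nonneg_of_discrim_nonpos {σ π : ℝ} (h : discrim 1 (-σ) π ≤ 0) (α β : ℝ) :
    0 ≤ α ^ 2 * π + α * β * σ + β ^ 2 := by
  unfold discrim at h
  nlinarith [sq_nonneg (2 * β + α * σ), mul_nonneg (sq_nonneg α) (neg_nonneg.2 h)]

lemma exists_lt_lt_of_ne {r s t : ℝ} (hst : s < t) (hrs : r ≠ s) (hrt : r ≠ t) :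
    ∃ u w v : ℝ, u < w ∧ w < v ∧
      ∀ x, (x - r) * (x - s) * (x - t) = (x - u) * (x - w) * (x - v) := by
  rcases hrs.lt_or_gt with hrs | hsr
  · exact ⟨r, s, t, hrs, hst, fun x ↦ rfl⟩
  rcases hrt.lt_or_gt with hrt | htr
  · exact ⟨s, r, t, hsr, hrt, fun x ↦ by ring⟩
  · exact ⟨s, t, r, hst, htr, fun x ↦ by ring⟩

lemma exists_lt_add_eq_mul_eq_of_discrim_pos {σ π : ℝ} (h : 0 < discrim 1 (-σ) π) :
    ∃ s t : ℝ, s < t ∧ s + t = σ ∧ s * t = π := by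
  refine ⟨(σ - √(discrim 1 (-σ) π)) / 2, (σ + √(discrim 1 (-σ) π)) / 2,
    by linarith [Real.sqrt_pos.2 h], by ring, ?_⟩
  have := Real.sq_sqrt h.le
  unfold discrim at this ⊢
  linear_combination -this / 4

namespace Kopel

def cubic (μ₁ μ₂ x : ℝ) : ℝ := μ₁ * μ₂ * (1 - x) * (1 - μ₂ * x * (1 - x)) - 1

def cubicDeriv (μ₁ μ₂ x : ℝ) : ℝ := -(μ₁ * μ₂) * (μ₂ * (3 * x ^ 2 - 4 * x + 1) + 1)

def multiplier (μ₁ μ₂ x : ℝ) : ℝ := μ₁ * (1 - 2 * (μ₂ * x * (1 - x))) * (μ₂ * (1 - 2 * x))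

noncomputable def cofactor (μ₂ r x : ℝ) : ℝ := x ^ 2 - (2 - r) * x + ((1 - r) ^ 2 + μ₂⁻¹)

/- `flipRem μ₁ μ₂ r` is the remainder of `2 + x * cubicDeriv μ₁ μ₂ x` modulo `cofactor μ₂ r x`, and
`flipNorm μ₁ μ₂ r` is its product over the two roots of `cofactor μ₂ r`, expressed through their sum
`2 - r` and product `(1 - r) ^ 2 + μ₂⁻¹`; it makes sense whether these roots are real or not. -/
def flipRem (μ₁ μ₂ r x : ℝ) : ℝ :=
  2 - μ₁ * μ₂ * (2 * (μ₂ * (1 - r) - 1) * x + (μ₂ * (1 - r) ^ 2 + 1) * (3 * r - 2))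

noncomputable def flipNorm (μ₁ μ₂ r : ℝ) : ℝ :=
  let α := -2 * μ₁ * μ₂ * (μ₂ * (1 - r) - 1)
  let β := 2 - μ₁ * μ₂ * (μ₂ * (1 - r) ^ 2 + 1) * (3 * r - 2)
  α ^ 2 * ((1 - r) ^ 2 + μ₂⁻¹) + α * β * (2 - r) + β ^ 2

def R₁ (μ₁ μ₂ : ℝ) : ℝ :=
  μ₁ ^ 2 * μ₂ ^ 2 - 4 * μ₁ ^ 2 * μ₂ - 4 * μ₁ * μ₂ ^ 2 + 18 * μ₁ * μ₂ - 27

def S₃ (μ₁ μ₂ : ℝ) : ℝ :=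
  μ₁ ^ 3 * μ₂ ^ 3 - 4 * μ₁ ^ 3 * μ₂ ^ 2 - 4 * μ₁ ^ 2 * μ₂ ^ 3 + 15 * μ₁ ^ 2 * μ₂ ^ 2
    + 12 * μ₁ ^ 2 * μ₂ + 12 * μ₁ * μ₂ ^ 2 - 85 * μ₁ * μ₂ + 125

def StablePositiveEquilibria (μ₁ μ₂ : ℝ) : Set (ℝ × ℝ) :=
  {p : ℝ × ℝ | p.1 = μ₁ * p.2 * (1 - p.2) ∧ p.2 = μ₂ * p.1 * (1 - p.1) ∧
    0 < p.1 ∧ 0 < p.2 ∧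
    ∀ lam ∈ spectrum ℂ
      (!![(0 : ℂ), ((μ₁ * (1 - 2 * p.2) : ℝ) : ℂ);
          ((μ₂ * (1 - 2 * p.1) : ℝ) : ℂ), (0 : ℂ)] : Matrix (Fin 2) (Fin 2) ℂ),
      ‖lam‖ < 1}

variable {μ₁ μ₂ : ℝ}

lemma cubic_eq_zero_iff {x : ℝ} (hx : x ≠ 0) :
    cubic μ₁ μ₂ x = 0 ↔ x = μ₁ * (μ₂ * x * (1 - x)) * (1 - μ₂ * x * (1 - x)) := by
  rw [← mul_right_inj' hx, mul_zero, ← sub_eq_zero (b := μ₁ * _ * _)]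
  unfold cubic
  constructor <;> intro h <;> linear_combination -h

/- `multiplier μ₁ μ₂ x` is the derivative of `f₁ ∘ f₂` at `x`, where `f₁ y = μ₁ y (1 - y)` and
`f₂ x = μ₂ x (1 - x)`, and `f₁ (f₂ x) = x * (1 + cubic μ₁ μ₂ x)`. -/
lemma multiplier_eq_one_add_mul_cubicDeriv {x : ℝ} (hx : cubic μ₁ μ₂ x = 0) :
    multiplier μ₁ μ₂ x = 1 + x * cubicDeriv μ₁ μ₂ x := by
  unfold multiplier cubicDeriv
  unfold cubic at hx
  linear_combination hx

lemma mem_Ioo_of_cubic_eq_zero (hμ : 1 < μ₁ * μ₂) (hμ₂ : 0 < μ₂) {x : ℝ}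
    (hx : cubic μ₁ μ₂ x = 0) : x ∈ Set.Ioo 0 1 := by
  unfold cubic at hx
  have hq : x * (1 - x) ≤ 0 → 1 ≤ 1 - μ₂ * x * (1 - x) := fun h ↦ by nlinarith
  have hμ₀ : 0 ≤ μ₁ * μ₂ := by linarith
  constructor
  · by_contra! h
    have h₁ : 1 ≤ (1 - x) * (1 - μ₂ * x * (1 - x)) := one_le_mul_of_one_le_of_one_le
      (by linarith) (hq (mul_nonpos_of_nonpos_of_nonneg h (by linarith)))
    nlinarith [mul_le_mul_of_nonneg_left h₁ hμ₀]
  · by_contra! h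
    have h₁ : (1 - x) * (1 - μ₂ * x * (1 - x)) ≤ 0 := mul_nonpos_of_nonpos_of_nonneg
      (by linarith) (by linarith [hq (mul_nonpos_of_nonneg_of_nonpos (by linarith) (by linarith))])
    nlinarith [mul_le_mul_of_nonneg_left h₁ hμ₀]

lemma exists_cubic_eq_zero (hμ : 1 < μ₁ * μ₂) : ∃ r, cubic μ₁ μ₂ r = 0 := by
  have hcont : ContinuousOn (cubic μ₁ μ₂) (Set.Icc 0 1) := by unfold cubic; fun_prop
  have hsign : (0 : ℝ) ∈ Set.Icc (cubic μ₁ μ₂ 1) (cubic μ₁ μ₂ 0) := by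
    norm_num [cubic]
    linarith
  obtain ⟨r, -, hr⟩ := intermediate_value_Icc' zero_le_one hcont hsign
  exact ⟨r, hr⟩

lemma abs_multiplier_lt_one_iff {x : ℝ} (hx : cubic μ₁ μ₂ x = 0) (hx₀ : 0 < x) :
    |multiplier μ₁ μ₂ x| < 1 ↔ cubicDeriv μ₁ μ₂ x < 0 ∧ 0 < 2 + x * cubicDeriv μ₁ μ₂ x := by
  rw [multiplier_eq_one_add_mul_cubicDeriv hx, abs_lt]
  constructor
  · rintro ⟨h₁, h₂⟩
    exact ⟨neg_of_mul_neg_right (by linarith) hx₀.le, by linarith⟩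
  · rintro ⟨h₁, h₂⟩
    exact ⟨by linarith, by linarith [mul_neg_of_pos_of_neg hx₀ h₁]⟩

lemma cubic_eq_mul_cofactor (hμ₂ : μ₂ ≠ 0) {r : ℝ} (hr : cubic μ₁ μ₂ r = 0) (x : ℝ) :
    cubic μ₁ μ₂ x = -(μ₁ * μ₂ ^ 2) * (x - r) * cofactor μ₂ r x := by
  unfold cubic cofactor at *
  field_simp
  linear_combination hr

lemma cubicDeriv_eq_mul_cofactor (hμ₂ : μ₂ ≠ 0) (r : ℝ) :
    cubicDeriv μ₁ μ₂ r = -(μ₁ * μ₂ ^ 2) * cofactor μ₂ r r := by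
  unfold cubicDeriv cofactor
  field_simp
  ring

lemma cofactor_eq_mul {r s t : ℝ} (hsum : s + t = 2 - r) (hprod : s * t = (1 - r) ^ 2 + μ₂⁻¹)
    (x : ℝ) : cofactor μ₂ r x = (x - s) * (x - t) := by
  unfold cofactor
  linear_combination x * hsum - hprod

lemma cofactor_pos_of_discrim_neg {r : ℝ} (h : discrim 1 (-(2 - r)) ((1 - r) ^ 2 + μ₂⁻¹) < 0)
    (x : ℝ) : 0 < cofactor μ₂ r x := by
  unfold cofactor
  unfold discrim at h
  nlinarith [sq_nonneg (2 * x - (2 - r))]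

lemma mul_eq_one_of_cubic_eq_zero {r : ℝ} (hr : cubic μ₁ μ₂ r = 0) :
    μ₁ * (μ₂ * (1 - r) * (1 - μ₂ * r * (1 - r))) = 1 := by
  unfold cubic at hr
  linear_combination hr

lemma discrim_mul_cubicDeriv_sq (hμ₂ : μ₂ ≠ 0) {r : ℝ} (hr : cubic μ₁ μ₂ r = 0) :
    discrim 1 (-(2 - r)) ((1 - r) ^ 2 + μ₂⁻¹) * cubicDeriv μ₁ μ₂ r ^ 2 = R₁ μ₁ μ₂ := by
  have h := mul_eq_one_of_cubic_eq_zero hr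
  -- eliminate `μ₁ = d⁻¹`, with `d` kept atomic so that `field_simp` can clear it
  generalize hd : μ₂ * (1 - r) * (1 - μ₂ * r * (1 - r)) = d at h
  obtain rfl : μ₁ = d⁻¹ := eq_inv_of_mul_eq_one_left h
  have hd₀ : d ≠ 0 := by rintro rfl; simp at h
  unfold discrim cubicDeriv R₁
  field_simp
  subst hd
  ring

lemma two_add_mul_cubicDeriv_eq_flipRem (hμ₂ : μ₂ ≠ 0) {r s : ℝ} (hs : cofactor μ₂ r s = 0) :
    2 + s * cubicDeriv μ₁ μ₂ s = flipRem μ₁ μ₂ r s := by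
  unfold cofactor at hs
  unfold cubicDeriv flipRem
  linear_combination (norm := skip) (-(μ₁ * μ₂ ^ 2) * (3 * s + 2 - 3 * r)) * hs
  field_simp
  ring

lemma flipRem_mul_flipRem {r s t : ℝ} (hsum : s + t = 2 - r)
    (hprod : s * t = (1 - r) ^ 2 + μ₂⁻¹) :
    flipRem μ₁ μ₂ r s * flipRem μ₁ μ₂ r t = flipNorm μ₁ μ₂ r := by
  unfold flipRem flipNorm
  linear_combination (2 * μ₁ * μ₂ * (μ₂ * (1 - r) - 1)) ^ 2 * hprod
    + (-2 * μ₁ * μ₂ * (μ₂ * (1 - r) - 1))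
      * (2 - μ₁ * μ₂ * (μ₂ * (1 - r) ^ 2 + 1) * (3 * r - 2)) * hsum

lemma flipNorm_nonneg {r : ℝ} (h : discrim 1 (-(2 - r)) ((1 - r) ^ 2 + μ₂⁻¹) ≤ 0) :
    0 ≤ flipNorm μ₁ μ₂ r :=
  quadratic_form_nonneg_of_discrim_nonpos h _ _

lemma two_add_mul_cubicDeriv_mul_flipNorm (hμ₂ : μ₂ ≠ 0) {r : ℝ} (hr : cubic μ₁ μ₂ r = 0) :
    (2 + r * cubicDeriv μ₁ μ₂ r) * flipNorm μ₁ μ₂ r = S₃ μ₁ μ₂ := by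
  have h := mul_eq_one_of_cubic_eq_zero hr
  generalize hd : μ₂ * (1 - r) * (1 - μ₂ * r * (1 - r)) = d at h
  obtain rfl : μ₁ = d⁻¹ := eq_inv_of_mul_eq_one_left h
  have hd₀ : d ≠ 0 := by rintro rfl; simp at h
  unfold flipNorm cubicDeriv S₃
  field_simp
  subst hd
  ring

lemma vieta_of_cubic_eq (hμ₁ : μ₁ ≠ 0) (hμ₂ : μ₂ ≠ 0) {u w v : ℝ}
    (hfac : ∀ x, cubic μ₁ μ₂ x = -(μ₁ * μ₂ ^ 2) * ((x - u) * (x - w) * (x - v))) :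
    w + v = 2 - u ∧ w * v = (1 - u) ^ 2 + μ₂⁻¹ := by
  have h₀ := hfac 0
  have h₁ := hfac 1
  have h₂ := hfac (-1)
  unfold cubic at h₀ h₁ h₂
  have hsum : μ₁ * μ₂ * μ₂ * (u + w + v - 2) = 0 := by linear_combination h₀ - (h₁ + h₂) / 2
  have hpair : μ₁ * μ₂ * (μ₂ * (u * w + u * v + w * v - 1) - 1) = 0 := by
    linear_combination (h₁ - h₂) / 2
  replace hsum := (mul_eq_zero.1 hsum).resolve_left (by simp [hμ₁, hμ₂])
  replace hpair := (mul_eq_zero.1 hpair).resolve_left (by simp [hμ₁, hμ₂])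
  refine ⟨by linear_combination hsum, ?_⟩
  field_simp
  linear_combination hpair - μ₂ * u * hsum

lemma cubicDeriv_eq_of_cubic_eq (hμ₁ : μ₁ ≠ 0) (hμ₂ : μ₂ ≠ 0) {u w v : ℝ}
    (hfac : ∀ x, cubic μ₁ μ₂ x = -(μ₁ * μ₂ ^ 2) * ((x - u) * (x - w) * (x - v))) :
    cubicDeriv μ₁ μ₂ u = -(μ₁ * μ₂ ^ 2) * ((u - w) * (u - v)) := by
  obtain ⟨hsum, hprod⟩ := vieta_of_cubic_eq hμ₁ hμ₂ hfac
  rw [cubicDeriv_eq_mul_cofactor hμ₂, cofactor_eq_mul hsum hprod]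

lemma two_add_mul_cubicDeriv_prod_eq_S₃ (hμ₁ : μ₁ ≠ 0) (hμ₂ : μ₂ ≠ 0) {u w v : ℝ}
    (hfac : ∀ x, cubic μ₁ μ₂ x = -(μ₁ * μ₂ ^ 2) * ((x - u) * (x - w) * (x - v))) :
    (2 + u * cubicDeriv μ₁ μ₂ u) * ((2 + w * cubicDeriv μ₁ μ₂ w) * (2 + v * cubicDeriv μ₁ μ₂ v))
      = S₃ μ₁ μ₂ := by
  obtain ⟨hsum, hprod⟩ := vieta_of_cubic_eq hμ₁ hμ₂ hfac
  have hu : cubic μ₁ μ₂ u = 0 := by rw [hfac]; ring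
  have hw : cofactor μ₂ u w = 0 := by rw [cofactor_eq_mul hsum hprod]; ring
  have hv : cofactor μ₂ u v = 0 := by rw [cofactor_eq_mul hsum hprod]; ring
  rw [two_add_mul_cubicDeriv_eq_flipRem hμ₂ hw, two_add_mul_cubicDeriv_eq_flipRem hμ₂ hv,
    flipRem_mul_flipRem hsum hprod, two_add_mul_cubicDeriv_mul_flipNorm hμ₂ hu]

theorem existsUnique_stable_root_of_three_roots (hμ : 1 < μ₁ * μ₂) (hμ₂ : 0 < μ₂) {u w v : ℝ}
    (huw : u < w) (hwv : w < v)
    (hfac : ∀ x, cubic μ₁ μ₂ x = -(μ₁ * μ₂ ^ 2) * ((x - u) * (x - w) * (x - v)))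
    (hS : S₃ μ₁ μ₂ < 0) :
    ∃! x, cubic μ₁ μ₂ x = 0 ∧ |multiplier μ₁ μ₂ x| < 1 := by
  have hM : 0 < μ₁ * μ₂ ^ 2 := by nlinarith
  have hμ₁ : μ₁ ≠ 0 := left_ne_zero_of_mul (zero_lt_one.trans hμ).ne'
  have hroot : ∀ x, cubic μ₁ μ₂ x = 0 ↔ x = u ∨ x = w ∨ x = v := by
    intro x
    simp [hfac, hM.ne', sub_eq_zero, or_assoc]
  have hstable : ∀ x, (cubic μ₁ μ₂ x = 0 ∧ |multiplier μ₁ μ₂ x| < 1) ↔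
      (x = u ∨ x = w ∨ x = v) ∧ cubicDeriv μ₁ μ₂ x < 0 ∧ 0 < 2 + x * cubicDeriv μ₁ μ₂ x := by
    intro x
    rw [← hroot]
    exact and_congr_right fun hx ↦
      abs_multiplier_lt_one_iff hx (mem_Ioo_of_cubic_eq_zero hμ hμ₂ hx).1
  have hdu : cubicDeriv μ₁ μ₂ u < 0 := by
    rw [cubicDeriv_eq_of_cubic_eq hμ₁ hμ₂.ne' hfac]
    nlinarith [mul_pos hM (mul_pos_of_neg_of_neg (sub_neg.2 huw) (sub_neg.2 (huw.trans hwv)))]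
  have hdw : 0 < cubicDeriv μ₁ μ₂ w := by
    rw [cubicDeriv_eq_of_cubic_eq hμ₁ hμ₂.ne' (u := w) (w := u) (v := v) fun x ↦ by rw [hfac]; ring]
    nlinarith [mul_pos hM (mul_pos (sub_pos.2 huw) (sub_pos.2 hwv))]
  have hdv : cubicDeriv μ₁ μ₂ v < 0 := by
    rw [cubicDeriv_eq_of_cubic_eq hμ₁ hμ₂.ne' (u := v) (w := u) (v := w) fun x ↦ by rw [hfac]; ring]
    nlinarith [mul_pos hM (mul_pos (sub_pos.2 (huw.trans hwv)) (sub_pos.2 hwv))]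
  have hw₀ : 0 < w := (mem_Ioo_of_cubic_eq_zero hμ hμ₂ ((hroot w).2 (by simp))).1
  have hψ : (2 + u * cubicDeriv μ₁ μ₂ u) * (2 + v * cubicDeriv μ₁ μ₂ v) < 0 := by
    refine neg_of_mul_neg_left (b := 2 + w * cubicDeriv μ₁ μ₂ w) ?_ (by positivity)
    linear_combination hS + two_add_mul_cubicDeriv_prod_eq_S₃ hμ₁ hμ₂.ne' hfac
  rcases mul_neg_iff.1 hψ with ⟨hψu, hψv⟩ | ⟨hψu, hψv⟩
  · refine ⟨u, (hstable u).2 ⟨by simp, hdu, hψu⟩, fun x hx ↦ ?_⟩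
    obtain ⟨rfl | rfl | rfl, hd, hψ⟩ := (hstable x).1 hx
    · rfl
    · linarith
    · linarith
  · refine ⟨v, (hstable v).2 ⟨by simp, hdv, hψv⟩, fun x hx ↦ ?_⟩
    obtain ⟨rfl | rfl | rfl, hd, hψ⟩ := (hstable x).1 hx
    · linarith
    · linarith
    · rfl

theorem existsUnique_stable_root_of_R₁_neg (hμ : 1 < μ₁ * μ₂) (hμ₂ : 0 < μ₂)
    (hR : R₁ μ₁ μ₂ < 0) (hS : 0 < S₃ μ₁ μ₂) :
    ∃! x, cubic μ₁ μ₂ x = 0 ∧ |multiplier μ₁ μ₂ x| < 1 := by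
  obtain ⟨r, hr⟩ := exists_cubic_eq_zero hμ
  have hM : 0 < μ₁ * μ₂ ^ 2 := by nlinarith
  have hΔ : discrim 1 (-(2 - r)) ((1 - r) ^ 2 + μ₂⁻¹) < 0 := by
    rw [← discrim_mul_cubicDeriv_sq hμ₂.ne' hr] at hR
    exact neg_of_mul_neg_left hR (sq_nonneg _)
  have hd : cubicDeriv μ₁ μ₂ r < 0 := by
    rw [cubicDeriv_eq_mul_cofactor hμ₂.ne']
    nlinarith [mul_pos hM (cofactor_pos_of_discrim_neg hΔ r)]
  have hψ : 0 < 2 + r * cubicDeriv μ₁ μ₂ r := by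
    rw [← two_add_mul_cubicDeriv_mul_flipNorm hμ₂.ne' hr] at hS
    exact pos_of_mul_pos_left hS (flipNorm_nonneg hΔ.le)
  refine ⟨r, ⟨hr, (abs_multiplier_lt_one_iff hr (mem_Ioo_of_cubic_eq_zero hμ hμ₂ hr).1).2
    ⟨hd, hψ⟩⟩, fun x ⟨hx, _⟩ ↦ ?_⟩
  rw [cubic_eq_mul_cofactor hμ₂.ne' hr] at hx
  simpa [hM.ne', (cofactor_pos_of_discrim_neg hΔ x).ne', sub_eq_zero] using hx

theorem existsUnique_stable_root_of_R₁_pos (hμ : 1 < μ₁ * μ₂) (hμ₂ : 0 < μ₂)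
    (hR : 0 < R₁ μ₁ μ₂) (hS : S₃ μ₁ μ₂ < 0) :
    ∃! x, cubic μ₁ μ₂ x = 0 ∧ |multiplier μ₁ μ₂ x| < 1 := by
  obtain ⟨r, hr⟩ := exists_cubic_eq_zero hμ
  rw [← discrim_mul_cubicDeriv_sq hμ₂.ne' hr] at hR
  obtain ⟨s, t, hst, hsum, hprod⟩ :=
    exists_lt_add_eq_mul_eq_of_discrim_pos (pos_of_mul_pos_left hR (sq_nonneg _))
  have hd : cubicDeriv μ₁ μ₂ r = -(μ₁ * μ₂ ^ 2) * ((r - s) * (r - t)) := by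
    rw [cubicDeriv_eq_mul_cofactor hμ₂.ne', cofactor_eq_mul hsum hprod]
  have hrs : r ≠ s := by rintro rfl; simp [hd] at hR
  have hrt : r ≠ t := by rintro rfl; simp [hd] at hR
  obtain ⟨u, w, v, huw, hwv, hperm⟩ := exists_lt_lt_of_ne hst hrs hrt
  refine existsUnique_stable_root_of_three_roots hμ hμ₂ huw hwv (fun x ↦ ?_) hS
  rw [cubic_eq_mul_cofactor hμ₂.ne' hr, cofactor_eq_mul hsum hprod, ← hperm]
  ring

lemma stablePositiveEquilibria_eq_image (hμ : 1 < μ₁ * μ₂) (hμ₂ : 0 < μ₂) :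
    StablePositiveEquilibria μ₁ μ₂ = (fun x ↦ (x, μ₂ * x * (1 - x))) ''
      {x | cubic μ₁ μ₂ x = 0 ∧ |multiplier μ₁ μ₂ x| < 1} := by
  ext ⟨x, y⟩
  simp only [StablePositiveEquilibria, Set.mem_ofPred_eq, Set.mem_image, Prod.mk.injEq,
    forall_mem_spectrum_antidiag_norm_lt_one_iff, ← Complex.ofReal_mul, Complex.norm_real,
    Real.norm_eq_abs]
  constructor
  · rintro ⟨hx, rfl, hx₀, -, hstable⟩
    exact ⟨x, ⟨(cubic_eq_zero_iff hx₀.ne').2 hx, hstable⟩, rfl, rfl⟩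
  · rintro ⟨x, ⟨hx, hstable⟩, rfl, rfl⟩
    obtain ⟨hx₀, hx₁⟩ := mem_Ioo_of_cubic_eq_zero hμ hμ₂ hx
    exact ⟨(cubic_eq_zero_iff hx₀.ne').1 hx, rfl, hx₀,
      mul_pos (mul_pos hμ₂ hx₀) (sub_pos.2 hx₁), hstable⟩

end Kopel

open Kopel

theorem kopel_one_stable_positive_equilibrium_general (μ₁ μ₂ : ℝ) (hμ₂ : 0 < μ₂)
    (h : (1 < μ₁ * μ₂ ∧
          μ₁ ^ 2 * μ₂ ^ 2 - 4 * μ₁ ^ 2 * μ₂ - 4 * μ₁ * μ₂ ^ 2 + 18 * μ₁ * μ₂ - 27 < 0 ∧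
          0 < μ₁ ^ 3 * μ₂ ^ 3 - 4 * μ₁ ^ 3 * μ₂ ^ 2 - 4 * μ₁ ^ 2 * μ₂ ^ 3
            + 15 * μ₁ ^ 2 * μ₂ ^ 2 + 12 * μ₁ ^ 2 * μ₂ + 12 * μ₁ * μ₂ ^ 2
            - 85 * μ₁ * μ₂ + 125) ∨
        (1 < μ₁ * μ₂ ∧
          0 < μ₁ ^ 2 * μ₂ ^ 2 - 4 * μ₁ ^ 2 * μ₂ - 4 * μ₁ * μ₂ ^ 2 + 18 * μ₁ * μ₂ - 27 ∧
          μ₁ ^ 3 * μ₂ ^ 3 - 4 * μ₁ ^ 3 * μ₂ ^ 2 - 4 * μ₁ ^ 2 * μ₂ ^ 3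
            + 15 * μ₁ ^ 2 * μ₂ ^ 2 + 12 * μ₁ ^ 2 * μ₂ + 12 * μ₁ * μ₂ ^ 2
            - 85 * μ₁ * μ₂ + 125 < 0)) :
    ({p : ℝ × ℝ | p.1 = μ₁ * p.2 * (1 - p.2) ∧ p.2 = μ₂ * p.1 * (1 - p.1) ∧
        0 < p.1 ∧ 0 < p.2 ∧
        ∀ lam ∈ spectrum ℂ
          (!![(0 : ℂ), ((μ₁ * (1 - 2 * p.2) : ℝ) : ℂ);
              ((μ₂ * (1 - 2 * p.1) : ℝ) : ℂ), (0 : ℂ)] : Matrix (Fin 2) (Fin 2) ℂ),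
          ‖lam‖ < 1}).ncard = 1 := by
  have hμ : 1 < μ₁ * μ₂ := by rcases h with ⟨hμ, -⟩ | ⟨hμ, -⟩ <;> exact hμ
  obtain ⟨x₀, hx₀, huniq⟩ : ∃! x, cubic μ₁ μ₂ x = 0 ∧ |multiplier μ₁ μ₂ x| < 1 := by
    rcases h with ⟨-, hR, hS⟩ | ⟨-, hR, hS⟩
    · exact existsUnique_stable_root_of_R₁_neg hμ hμ₂ hR hS
    · exact existsUnique_stable_root_of_R₁_pos hμ hμ₂ hR hS
  change (StablePositiveEquilibria μ₁ μ₂).ncard = 1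
  rw [stablePositiveEquilibria_eq_image hμ hμ₂,
    Set.ncard_image_of_injective _ fun _ _ h ↦ congrArg Prod.fst h]
  exact Set.ncard_eq_one.2 ⟨x₀, Set.eq_singleton_iff_unique_mem.2 ⟨hx₀, huniq⟩⟩

/-- Case `ρ₁ = ρ₂ = 1`: if `μ₁ μ₂ > 1`, and either (`R₁ < 0` and `S₃ > 0`) or
(`R₁ > 0` and `S₃ < 0`), then Kopel's model has exactly one stable positive
equilibrium. -/
theorem kopel_one_stable_positive_equilibrium (μ₁ μ₂ : ℝ) (hμ₁ : 0 < μ₁) (hμ₂ : 0 < μ₂)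
    (h : (1 < μ₁ * μ₂ ∧
          μ₁ ^ 2 * μ₂ ^ 2 - 4 * μ₁ ^ 2 * μ₂ - 4 * μ₁ * μ₂ ^ 2 + 18 * μ₁ * μ₂ - 27 < 0 ∧
          0 < μ₁ ^ 3 * μ₂ ^ 3 - 4 * μ₁ ^ 3 * μ₂ ^ 2 - 4 * μ₁ ^ 2 * μ₂ ^ 3
            + 15 * μ₁ ^ 2 * μ₂ ^ 2 + 12 * μ₁ ^ 2 * μ₂ + 12 * μ₁ * μ₂ ^ 2
            - 85 * μ₁ * μ₂ + 125) ∨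
        (1 < μ₁ * μ₂ ∧
          0 < μ₁ ^ 2 * μ₂ ^ 2 - 4 * μ₁ ^ 2 * μ₂ - 4 * μ₁ * μ₂ ^ 2 + 18 * μ₁ * μ₂ - 27 ∧
          μ₁ ^ 3 * μ₂ ^ 3 - 4 * μ₁ ^ 3 * μ₂ ^ 2 - 4 * μ₁ ^ 2 * μ₂ ^ 3
            + 15 * μ₁ ^ 2 * μ₂ ^ 2 + 12 * μ₁ ^ 2 * μ₂ + 12 * μ₁ * μ₂ ^ 2
            - 85 * μ₁ * μ₂ + 125 < 0)) :
    ({p : ℝ × ℝ | p.1 = μ₁ * p.2 * (1 - p.2) ∧ p.2 = μ₂ * p.1 * (1 - p.1) ∧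
        0 < p.1 ∧ 0 < p.2 ∧
        ∀ lam ∈ spectrum ℂ
          (!![(0 : ℂ), ((μ₁ * (1 - 2 * p.2) : ℝ) : ℂ);
              ((μ₂ * (1 - 2 * p.1) : ℝ) : ℂ), (0 : ℂ)] : Matrix (Fin 2) (Fin 2) ℂ),
          ‖lam‖ < 1}).ncard = 1 :=
  kopel_one_stable_positive_equilibrium_general μ₁ μ₂ hμ₂ h
end

section
/- Let ρ ∈ (0,1] and μ > 0, and let F be the symmetric Kopel map. If μ ≥ 3, then the set of fixed points of F is exactly {(0,0), (1−1/μ, 1−1/μ), ((μ+1+d)/(2μ), (μ+1−d)/(2μ)), ((μ+1−d)/(2μ), (μ+1+d)/(2μ))} where d = √((μ+1)(μ−3)); if 0 < μ < 3, then the set of fixed points of F is exactly {(0,0), (1−1/μ, 1−1/μ)}. -/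
/-!
Since `ρ ≠ 0`, a fixed point of the Kopel map is a pair `(x, y)` with `x = f y` and `y = f x`
for the logistic map `f t = μ t (1 - t)`. Subtracting the two equations gives
`(x - y) (μ + 1 - μ (x + y)) = 0`. On the diagonal we get the fixed points `0` and `1 - 1/μ`
of `f`; off it, `μ (x + y) = μ + 1` and `μ² x y = μ + 1`, so `(μ (x - y))² = (μ + 1)(μ - 3)`,
which has the two symmetric solutions exactly when `μ ≥ 3`.
-/

theorem sub_mul_add_mul_eq_self_iff {R : Type*} [CommRing R] [NoZeroDivisors R] {ρ : R}
    (hρ : ρ ≠ 0) {a b : R} : (1 - ρ) * a + ρ * b = a ↔ a = b := by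
  rw [← sub_eq_zero, show (1 - ρ) * a + ρ * b - a = ρ * (b - a) by ring, mul_eq_zero,
    sub_eq_zero, or_iff_right hρ, eq_comm]

theorem kopel_fixed_iff {ρ μ : ℝ} (hρ : ρ ≠ 0) (x y : ℝ) :
    ((1 - ρ) * x + ρ * μ * y * (1 - y), (1 - ρ) * y + ρ * μ * x * (1 - x)) = (x, y) ↔
      x = μ * y * (1 - y) ∧ y = μ * x * (1 - x) := by
  simp only [Prod.mk.injEq, mul_assoc, sub_mul_add_mul_eq_self_iff hρ]

theorem logistic_two_cycle_iff {μ x y : ℝ} (hμ : μ ≠ 0) :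
    x = μ * y * (1 - y) ∧ y = μ * x * (1 - x) ↔
      (x = 0 ∧ y = 0) ∨ (x = 1 - 1 / μ ∧ y = 1 - 1 / μ) ∨
        (μ * (x + y) = μ + 1 ∧ (μ * (x - y)) ^ 2 = (μ + 1) * (μ - 3)) := by
  constructor
  · rintro ⟨h1, h2⟩
    have hfac : (x - y) * (μ + 1 - μ * (x + y)) = 0 := by linear_combination h1 - h2
    rcases mul_eq_zero.mp hfac with hxy | hsum
    · obtain rfl : x = y := by linarith
      have hroot : x * (μ * x - (μ - 1)) = 0 := by linear_combination h2
      rcases mul_eq_zero.mp hroot with h | h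
      · exact Or.inl ⟨h, h⟩
      · have hx : x = 1 - 1 / μ := by field_simp; linarith
        exact Or.inr (Or.inl ⟨hx, hx⟩)
    · have hs : μ * (x + y) = μ + 1 := by linarith
      have hp : μ ^ 2 * (x * y) = μ + 1 := by
        linear_combination (μ * (x + y) + 2) / 2 * hs - μ / 2 * h1 - μ / 2 * h2
      refine Or.inr (Or.inr ⟨hs, ?_⟩)
      linear_combination (μ * (x + y) + μ + 1) * hs - 4 * hp
  · rintro (⟨rfl, rfl⟩ | ⟨rfl, rfl⟩ | ⟨hs, hd⟩)
    · simp
    · constructor <;> (field_simp; ring)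
    · have hp : μ ^ 2 * (x * y) = μ + 1 := by
        linear_combination (μ * (x + y) + μ + 1) / 4 * hs - hd / 4
      constructor <;> apply mul_left_cancel₀ hμ
      · linear_combination (1 + μ * y) * hs - hp
      · linear_combination (1 + μ * x) * hs - hp

theorem mul_add_eq_and_sq_mul_sub_eq_iff {μ a c x y : ℝ} (hμ : μ ≠ 0) (hc : 0 ≤ c) :
    μ * (x + y) = a ∧ (μ * (x - y)) ^ 2 = c ↔
      (x = (a + √c) / (2 * μ) ∧ y = (a - √c) / (2 * μ)) ∨
        (x = (a - √c) / (2 * μ) ∧ y = (a + √c) / (2 * μ)) := by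
  conv_lhs => rw [← Real.sq_sqrt hc, sq_eq_sq_iff_eq_or_eq_neg, and_or_left]
  refine or_congr ?_ ?_ <;> constructor
  all_goals first
    | rintro ⟨hs, hd⟩; constructor <;> (field_simp; linarith)
    | rintro ⟨rfl, rfl⟩; constructor <;> (field_simp; ring)

/-- Fixed points of the symmetric Kopel map: for `μ ≥ 3` there are exactly four,
and for `0 < μ < 3` exactly two. -/
theorem symmetric_kopel_fixed_points (ρ μ : ℝ)
    (hρ : ρ ∈ Set.Ioc (0 : ℝ) 1) (hμ : 0 < μ)
    (F : ℝ × ℝ → ℝ × ℝ)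
    (hF : ∀ p : ℝ × ℝ, F p =
      ((1 - ρ) * p.1 + ρ * μ * p.2 * (1 - p.2),
       (1 - ρ) * p.2 + ρ * μ * p.1 * (1 - p.1))) :
    (3 ≤ μ → {p : ℝ × ℝ | F p = p} =
      {((0 : ℝ), (0 : ℝ)), (1 - 1 / μ, 1 - 1 / μ),
        ((μ + 1 + Real.sqrt ((μ + 1) * (μ - 3))) / (2 * μ),
         (μ + 1 - Real.sqrt ((μ + 1) * (μ - 3))) / (2 * μ)),
        ((μ + 1 - Real.sqrt ((μ + 1) * (μ - 3))) / (2 * μ),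
         (μ + 1 + Real.sqrt ((μ + 1) * (μ - 3))) / (2 * μ))}) ∧
    (μ < 3 → {p : ℝ × ℝ | F p = p} =
      {((0 : ℝ), (0 : ℝ)), (1 - 1 / μ, 1 - 1 / μ)}) := by
  have hfix (x y : ℝ) : F (x, y) = (x, y) ↔
      (x = 0 ∧ y = 0) ∨ (x = 1 - 1 / μ ∧ y = 1 - 1 / μ) ∨
        (μ * (x + y) = μ + 1 ∧ (μ * (x - y)) ^ 2 = (μ + 1) * (μ - 3)) := by
    rw [hF, kopel_fixed_iff hρ.1.ne', logistic_two_cycle_iff hμ.ne']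
  refine ⟨fun h3 => ?_, fun h3 => ?_⟩ <;> ext ⟨x, y⟩ <;>
    simp only [Set.mem_ofPred_eq, hfix, Set.mem_insert_iff, Set.mem_singleton_iff, Prod.mk.injEq]
  · rw [mul_add_eq_and_sq_mul_sub_eq_iff hμ.ne' (by nlinarith)]
  · have hneg : (μ + 1) * (μ - 3) < 0 := by nlinarith
    have no_two_cycle : ¬(μ * (x + y) = μ + 1 ∧ (μ * (x - y)) ^ 2 = (μ + 1) * (μ - 3)) :=
      fun ⟨_, hd⟩ => (sq_nonneg _).not_gt (hd ▸ hneg)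
    rw [or_iff_left no_two_cycle]
end

section
/- Let ρ ∈ (0,1] and μ > 0, and let M(0,0) be the Jacobian matrix of the symmetric Kopel map at the origin, i.e., the real 2×2 matrix with rows (1−ρ, ρμ) and (ρμ, 1−ρ). If 2ρ²(μ−1)(μ+1)(ρμ−ρ+2)(ρμ+ρ−2) > 0, 2ρ(ρ²μ²−ρ²+2ρ−2)(ρμ²−ρ+2) > 0, and 2(ρ²μ²+2ρ²μ+ρ²−2ρμ−2ρ+2)(ρ²μ²−2ρ²μ+ρ²+2ρμ−2ρ+2) > 0, then every eigenvalue of M(0,0)ᵀM(0,0) is strictly greater than 1; equivalently, ‖M(0,0)·v‖ > ‖v‖ for every nonzero v ∈ ℝ², where ‖·‖ is the Euclidean norm. In particular, under these conditions the fixed point (0,0) is a repeller of the symmetric Kopel map. -/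
open Matrix

private lemma cauchy2 (p1 p2 q1 q2 : ℝ) :
    p1*q1 + p2*q2 ≤ Real.sqrt (p1^2+p2^2) * Real.sqrt (q1^2+q2^2) := by
  rcases le_or_gt (p1*q1 + p2*q2) 0 with h | h
  · exact h.trans (mul_nonneg (Real.sqrt_nonneg _) (Real.sqrt_nonneg _))
  · rw [← Real.sqrt_mul (by positivity)]
    rw [show p1*q1 + p2*q2 = Real.sqrt ((p1*q1+p2*q2)^2) from (Real.sqrt_sq h.le).symm]
    apply Real.sqrt_le_sqrt
    nlinarith [sq_nonneg (p1*q2 - p2*q1)]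

private lemma tri2 (p1 p2 q1 q2 : ℝ) :
    Real.sqrt ((p1+q1)^2+(p2+q2)^2) ≤ Real.sqrt (p1^2+p2^2) + Real.sqrt (q1^2+q2^2) := by
  have h1 := Real.sq_sqrt (show (0:ℝ) ≤ p1^2+p2^2 by positivity)
  have h2 := Real.sq_sqrt (show (0:ℝ) ≤ q1^2+q2^2 by positivity)
  have hc := cauchy2 p1 p2 q1 q2
  have hn1 := Real.sqrt_nonneg (p1^2+p2^2)
  have hn2 := Real.sqrt_nonneg (q1^2+q2^2)
  calc Real.sqrt ((p1+q1)^2+(p2+q2)^2)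
      ≤ Real.sqrt ((Real.sqrt (p1^2+p2^2) + Real.sqrt (q1^2+q2^2))^2) := by
        apply Real.sqrt_le_sqrt; nlinarith
    _ = _ := Real.sqrt_sq (by positivity)

private lemma lower2 (A1 A2 e1 e2 : ℝ) :
    Real.sqrt (A1^2+A2^2) - Real.sqrt (e1^2+e2^2) ≤ Real.sqrt ((A1+e1)^2+(A2+e2)^2) := by
  have h := tri2 (A1+e1) (A2+e2) (-e1) (-e2)
  have h1 : (A1+e1 + -e1)^2 + (A2+e2 + -e2)^2 = A1^2+A2^2 := by ring
  have h2 : (-e1)^2 + (-e2)^2 = e1^2+e2^2 := by ring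
  rw [h1, h2] at h
  linarith

set_option maxHeartbeats 1600000 in
private lemma repel_aux (ρ μ : ℝ) (hρ0 : 0 < ρ) (hμ : 0 < μ)
    (ha2 : 1 < (1 - ρ + ρ*μ)^2) (hb2 : 1 < (1 - ρ - ρ*μ)^2)
    (F : ℝ × ℝ → ℝ × ℝ)
    (hF : ∀ p : ℝ × ℝ, F p =
      ((1 - ρ) * p.1 + ρ * μ * p.2 * (1 - p.2),
       (1 - ρ) * p.2 + ρ * μ * p.1 * (1 - p.1))) :
    ∃ s : ℝ, 1 < s ∧ ∃ r : ℝ, 0 < r ∧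
      ∀ u v : ℝ × ℝ, Real.sqrt (u.1 ^ 2 + u.2 ^ 2) ≤ r →
        Real.sqrt (v.1 ^ 2 + v.2 ^ 2) ≤ r → u ≠ v →
        s * Real.sqrt ((u.1 - v.1) ^ 2 + (u.2 - v.2) ^ 2) <
          Real.sqrt (((F u).1 - (F v).1) ^ 2 + ((F u).2 - (F v).2) ^ 2) := by
  have hρμ : 0 < ρ * μ := mul_pos hρ0 hμ
  obtain ⟨m, hm⟩ : ∃ m : ℝ, m = min ((1 - ρ + ρ*μ)^2) ((1 - ρ - ρ*μ)^2) := ⟨_, rfl⟩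
  have hm1 : 1 < m := hm ▸ lt_min ha2 hb2
  have hmle1 : m ≤ (1 - ρ + ρ*μ)^2 := hm ▸ min_le_left _ _
  have hmle2 : m ≤ (1 - ρ - ρ*μ)^2 := hm ▸ min_le_right _ _
  obtain ⟨c, hc⟩ : ∃ c : ℝ, c = Real.sqrt m := ⟨_, rfl⟩
  have hcsq : c^2 = m := by rw [hc]; exact Real.sq_sqrt (by linarith)
  have hcnn : 0 ≤ c := hc ▸ Real.sqrt_nonneg m
  have hc1 : 1 < c := by nlinarith
  have hc0 : 0 < c := by linarith
  obtain ⟨r, hr⟩ : ∃ r : ℝ, r = (c-1)/(8*ρ*μ) := ⟨_, rfl⟩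
  have hr0 : 0 < r := by rw [hr]; exact div_pos (by linarith) (by positivity)
  refine ⟨(1+c)/2, by linarith, r, hr0, ?_⟩
  intro u v hu hv huv
  have hdne : u.1 - v.1 ≠ 0 ∨ u.2 - v.2 ≠ 0 := by
    by_contra h
    push_neg at h
    exact huv (Prod.ext (by linarith [h.1] : u.1 = v.1) (by linarith [h.2] : u.2 = v.2))
  have hdpos : 0 < (u.1-v.1)^2 + (u.2-v.2)^2 := by rcases hdne with h | h <;> positivity
  obtain ⟨nd, hnd⟩ : ∃ nd : ℝ, nd = Real.sqrt ((u.1-v.1)^2 + (u.2-v.2)^2) := ⟨_, rfl⟩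
  have hndpos : 0 < nd := hnd ▸ Real.sqrt_pos.mpr hdpos
  have hndsq : nd^2 = (u.1-v.1)^2 + (u.2-v.2)^2 := by rw [hnd]; exact Real.sq_sqrt hdpos.le
  have hbound : ∀ w1 w2 : ℝ, Real.sqrt (w1^2 + w2^2) ≤ r → w1^2 ≤ r^2 ∧ w2^2 ≤ r^2 := by
    intro w1 w2 hw
    have hs := Real.sq_sqrt (show (0:ℝ) ≤ w1^2 + w2^2 by positivity)
    have hsn := Real.sqrt_nonneg (w1^2 + w2^2)
    constructor <;> nlinarith
  obtain ⟨hub1, hub2⟩ := hbound u.1 u.2 hu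
  obtain ⟨hvb1, hvb2⟩ := hbound v.1 v.2 hv
  obtain ⟨A1, hA1⟩ : ∃ x : ℝ, x = (1-ρ)*(u.1-v.1) + ρ*μ*(u.2-v.2) := ⟨_, rfl⟩
  obtain ⟨A2, hA2⟩ : ∃ x : ℝ, x = ρ*μ*(u.1-v.1) + (1-ρ)*(u.2-v.2) := ⟨_, rfl⟩
  obtain ⟨E1, hE1⟩ : ∃ x : ℝ, x = -(ρ*μ)*(u.2+v.2)*(u.2-v.2) := ⟨_, rfl⟩
  obtain ⟨E2, hE2⟩ : ∃ x : ℝ, x = -(ρ*μ)*(u.1+v.1)*(u.1-v.1) := ⟨_, rfl⟩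
  have hA : c * nd ≤ Real.sqrt (A1^2 + A2^2) := by
    have key : c^2 * ((u.1-v.1)^2 + (u.2-v.2)^2) ≤ A1^2 + A2^2 := by
      rw [hcsq, hA1, hA2]
      linarith [mul_le_mul_of_nonneg_right hmle1 (sq_nonneg ((u.1-v.1)+(u.2-v.2))),
        mul_le_mul_of_nonneg_right hmle2 (sq_nonneg ((u.1-v.1)-(u.2-v.2)))]
    calc c * nd = Real.sqrt (c^2 * ((u.1-v.1)^2+(u.2-v.2)^2)) := by
          rw [Real.sqrt_mul (by positivity), Real.sqrt_sq hc0.le, hnd]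
      _ ≤ _ := Real.sqrt_le_sqrt key
  have hE : Real.sqrt (E1^2 + E2^2) ≤ (c-1)/4 * nd := by
    have hsum2 : (u.2+v.2)^2 ≤ 4*r^2 := by nlinarith [hub2, hvb2, sq_nonneg (u.2-v.2)]
    have hsum1 : (u.1+v.1)^2 ≤ 4*r^2 := by nlinarith [hub1, hvb1, sq_nonneg (u.1-v.1)]
    have hrmul : (ρ*μ)^2 * (4*r^2) = ((c-1)/4)^2 := by
      rw [hr]
      field_simp
      ring
    have key : E1^2 + E2^2 ≤ ((c-1)/4)^2 * ((u.1-v.1)^2 + (u.2-v.2)^2) := by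
      rw [← hrmul, hE1, hE2]
      linarith [mul_le_mul_of_nonneg_left
          (mul_le_mul_of_nonneg_right hsum2 (sq_nonneg (u.2-v.2))) (sq_nonneg (ρ*μ)),
        mul_le_mul_of_nonneg_left
          (mul_le_mul_of_nonneg_right hsum1 (sq_nonneg (u.1-v.1))) (sq_nonneg (ρ*μ))]
    calc Real.sqrt (E1^2 + E2^2) ≤ Real.sqrt (((c-1)/4)^2 * ((u.1-v.1)^2+(u.2-v.2)^2)) :=
          Real.sqrt_le_sqrt key
      _ = (c-1)/4 * nd := by
          rw [Real.sqrt_mul (by positivity), Real.sqrt_sq (by linarith), hnd]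
  have hFeq : ((F u).1 - (F v).1)^2 + ((F u).2 - (F v).2)^2 = (A1+E1)^2 + (A2+E2)^2 := by
    rw [hF u, hF v, hA1, hA2, hE1, hE2]
    dsimp only
    ring
  rw [hFeq, ← hnd]
  have hlow := lower2 A1 A2 E1 E2
  have hfin : (1+c)/2 * nd < c * nd - (c-1)/4 * nd := by
    linarith [mul_pos (show (0:ℝ) < c - 1 by linarith) hndpos]
  linarith

/-- If the three Bistritz-type quantities at the origin are positive, then every
eigenvalue of `M(0,0)ᵀ M(0,0)` is greater than 1, equivalently `‖M(0,0)·v‖ > ‖v‖`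
(Euclidean norm) for every nonzero `v`; in particular `(0,0)` is a repeller of the
symmetric Kopel map. -/
theorem symmetric_kopel_origin_repeller (ρ μ : ℝ)
    (hρ : ρ ∈ Set.Ioc (0 : ℝ) 1) (hμ : 0 < μ)
    (F : ℝ × ℝ → ℝ × ℝ)
    (hF : ∀ p : ℝ × ℝ, F p =
      ((1 - ρ) * p.1 + ρ * μ * p.2 * (1 - p.2),
       (1 - ρ) * p.2 + ρ * μ * p.1 * (1 - p.1)))
    (h1 : 0 < 2 * ρ ^ 2 * (μ - 1) * (μ + 1) * (ρ * μ - ρ + 2) * (ρ * μ + ρ - 2))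
    (h2 : 0 < 2 * ρ * (ρ ^ 2 * μ ^ 2 - ρ ^ 2 + 2 * ρ - 2) * (ρ * μ ^ 2 - ρ + 2))
    (h3 : 0 < 2 * (ρ ^ 2 * μ ^ 2 + 2 * ρ ^ 2 * μ + ρ ^ 2 - 2 * ρ * μ - 2 * ρ + 2) *
        (ρ ^ 2 * μ ^ 2 - 2 * ρ ^ 2 * μ + ρ ^ 2 + 2 * ρ * μ - 2 * ρ + 2)) :
    (∀ t ∈ spectrum ℝ
        ((!![1 - ρ, ρ * μ; ρ * μ, 1 - ρ] : Matrix (Fin 2) (Fin 2) ℝ)ᵀ *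
          (!![1 - ρ, ρ * μ; ρ * μ, 1 - ρ] : Matrix (Fin 2) (Fin 2) ℝ)),
      1 < t) ∧
    (∀ v : ℝ × ℝ, v ≠ 0 →
      Real.sqrt (v.1 ^ 2 + v.2 ^ 2) <
        Real.sqrt (((1 - ρ) * v.1 + ρ * μ * v.2) ^ 2 +
          (ρ * μ * v.1 + (1 - ρ) * v.2) ^ 2)) ∧
    (∃ s : ℝ, 1 < s ∧ ∃ r : ℝ, 0 < r ∧
      ∀ u v : ℝ × ℝ, Real.sqrt (u.1 ^ 2 + u.2 ^ 2) ≤ r →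
        Real.sqrt (v.1 ^ 2 + v.2 ^ 2) ≤ r → u ≠ v →
        s * Real.sqrt ((u.1 - v.1) ^ 2 + (u.2 - v.2) ^ 2) <
          Real.sqrt (((F u).1 - (F v).1) ^ 2 + ((F u).2 - (F v).2) ^ 2)) := by
  obtain ⟨hρ0, hρ1⟩ := hρ
  have e1 : 0 < ((1-ρ+ρ*μ)^2 - 1) * ((1-ρ-ρ*μ)^2 - 1) := by nlinarith [h1]
  have e2 : 1 < (1-ρ+ρ*μ)^2 * (1-ρ-ρ*μ)^2 := by nlinarith [mul_pos hρ0 h2, hρ0]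
  have hab : 1 < (1-ρ+ρ*μ)^2 ∧ 1 < (1-ρ-ρ*μ)^2 := by
    rcases lt_trichotomy ((1-ρ+ρ*μ)^2) 1 with h | h | h
    · exfalso
      have hb : (1-ρ-ρ*μ)^2 < 1 := by nlinarith [e1]
      nlinarith [sq_nonneg (1-ρ+ρ*μ), sq_nonneg (1-ρ-ρ*μ)]
    · exfalso
      rw [h] at e1
      simp at e1
    · refine ⟨h, ?_⟩
      nlinarith [e1]
  obtain ⟨ha2, hb2⟩ := hab
  have hμρ : 0 < ρ * μ := mul_pos hρ0 hμ
  refine ⟨?_, ?_, repel_aux ρ μ hρ0 hμ ha2 hb2 F hF⟩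
  · intro t ht
    rw [spectrum.mem_iff] at ht
    have hdet : ((algebraMap ℝ (Matrix (Fin 2) (Fin 2) ℝ) t) -
        ((!![1 - ρ, ρ * μ; ρ * μ, 1 - ρ] : Matrix (Fin 2) (Fin 2) ℝ)ᵀ *
          !![1 - ρ, ρ * μ; ρ * μ, 1 - ρ])).det = 0 := by
      by_contra h
      exact ht ((Matrix.isUnit_iff_isUnit_det _).mpr (isUnit_iff_ne_zero.mpr h))
    have hexp : (t - (1-ρ+ρ*μ)^2) * (t - (1-ρ-ρ*μ)^2) = 0 := by
      rw [Matrix.det_fin_two] at hdet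
      simp only [Matrix.sub_apply, Matrix.algebraMap_matrix_apply, Matrix.mul_apply,
        Fin.sum_univ_two, Matrix.transpose_apply, Matrix.cons_val', Matrix.cons_val_zero,
        Matrix.cons_val_one, Matrix.head_cons, Matrix.head_fin_const, Matrix.empty_val',
        Matrix.cons_val_fin_one, if_true, if_false] at hdet
      norm_num at hdet
      linear_combination hdet
    rcases mul_eq_zero.mp hexp with h | h
    · have : t = (1-ρ+ρ*μ)^2 := by linarith
      linarith
    · have : t = (1-ρ-ρ*μ)^2 := by linarith
      linarith
  · intro v hv
    have hvne : v.1 ≠ 0 ∨ v.2 ≠ 0 := by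
      by_contra h
      push_neg at h
      exact hv (Prod.ext h.1 h.2)
    have hpos : 0 < v.1^2 + v.2^2 := by rcases hvne with h | h <;> positivity
    apply Real.sqrt_lt_sqrt (by positivity)
    have key : 0 < ((1-ρ+ρ*μ)^2 - 1) * (v.1+v.2)^2 + ((1-ρ-ρ*μ)^2 - 1) * (v.1-v.2)^2 := by
      rcases eq_or_ne (v.1+v.2) 0 with h | h
      · have h2' : v.1 - v.2 ≠ 0 := by
          intro hh
          exact hv (Prod.ext (by linarith : v.1 = 0) (by linarith : v.2 = 0))
        have hq : 0 < (v.1-v.2)^2 := by positivity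
        nlinarith [mul_nonneg (by linarith : (0:ℝ) ≤ (1-ρ+ρ*μ)^2 - 1) (sq_nonneg (v.1+v.2)),
          mul_pos (by linarith : (0:ℝ) < (1-ρ-ρ*μ)^2 - 1) hq]
      · have hq : 0 < (v.1+v.2)^2 := by positivity
        nlinarith [mul_nonneg (by linarith : (0:ℝ) ≤ (1-ρ-ρ*μ)^2 - 1) (sq_nonneg (v.1-v.2)),
          mul_pos (by linarith : (0:ℝ) < (1-ρ+ρ*μ)^2 - 1) hq]
    nlinarith [key]
end

section
/- Let ρ = 5/32 and μ = 59, and let M(x,y) be the Jacobian matrix of the corresponding symmetric Kopel map, i.e., the real 2×2 matrix with rows (27/32, (295/32)(1−2y)) and ((295/32)(1−2x), 27/32). Then for every (x,y) ∈ ℝ² with x² + y² ≤ 1/25 and every nonzero vector v ∈ ℝ², one has ‖M(x,y)·v‖ > ‖v‖ in the Euclidean norm; equivalently, all eigenvalues of M(x,y)ᵀM(x,y) are strictly greater than 1 throughout the closed disk of radius 1/5 centered at the origin. -/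
open Matrix

lemma kopel_key (b c : ℝ) (hb1 : 177/32 ≤ b) (hb2 : b ≤ 413/32)
    (hc1 : 177/32 ≤ c) (hc2 : c ≤ 413/32) :
    0 < ((27/32)^2 + c^2 - 1) * ((27/32)^2 + b^2 - 1) - (27/32)^2*(b+c)^2 := by
  nlinarith [mul_nonneg (sub_nonneg.2 hb1) (sub_nonneg.2 hc1),
    mul_nonneg (sub_nonneg.2 hb2) (sub_nonneg.2 hc2),
    sq_nonneg (b - c), sq_nonneg (b*c - 1),
    mul_pos (by nlinarith : (0:ℝ) < b^2 - 1) (by nlinarith : (0:ℝ) < c^2 - 1)]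

lemma kopel_quad (b c v1 v2 : ℝ) (hb1 : 177/32 ≤ b) (hb2 : b ≤ 413/32)
    (hc1 : 177/32 ≤ c) (hc2 : c ≤ 413/32) (hv : 0 < v1^2 + v2^2) :
    v1^2 + v2^2 < (27/32*v1 + b*v2)^2 + (c*v1 + 27/32*v2)^2 := by
  have hK := kopel_key b c hb1 hb2 hc1 hc2
  have hA : (0:ℝ) < (27/32)^2 + c^2 - 1 := by nlinarith
  rcases eq_or_ne v2 0 with h2 | h2
  · subst h2
    have hv1 : 0 < v1^2 := by simpa using hv
    nlinarith [mul_pos hA hv1]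
  · have hv2 : 0 < v2^2 := by positivity
    nlinarith [sq_nonneg (((27/32)^2 + c^2 - 1)*v1 + 27/32*(b+c)*v2),
      mul_pos hK hv2, hA]

lemma kopel_spec (b c t : ℝ) (hb1 : 177/32 ≤ b) (hb2 : b ≤ 413/32)
    (hc1 : 177/32 ≤ c) (hc2 : c ≤ 413/32)
    (ht : t ∈ spectrum ℝ
      ((!![(27 : ℝ) / 32, b; c, 27 / 32] : Matrix (Fin 2) (Fin 2) ℝ)ᵀ *
       (!![(27 : ℝ) / 32, b; c, 27 / 32] : Matrix (Fin 2) (Fin 2) ℝ))) :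
    1 < t := by
  have hT : (!![(27:ℝ)/32, b; c, 27/32])ᵀ = !![(27:ℝ)/32, c; b, 27/32] := by
    rw [Matrix.eta_fin_two (!![(27:ℝ)/32, b; c, 27/32])ᵀ]; simp
  rw [spectrum.mem_iff, Matrix.isUnit_iff_isUnit_det, isUnit_iff_ne_zero, not_not,
    hT] at ht
  rw [Matrix.det_fin_two] at ht
  simp [Matrix.mul_apply, Fin.sum_univ_two, Matrix.algebraMap_matrix_apply] at ht
  have h0 : (t - ((27/32)^2 + c^2)) * (t - ((27/32)^2 + b^2)) - (27/32*(b+c))^2 = 0 := by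
    linear_combination ht
  have hK := kopel_key b c hb1 hb2 hc1 hc2
  by_contra hle
  push_neg at hle
  have h1 : (0:ℝ) ≤ 1 - t := by linarith
  have h2 : (0:ℝ) ≤ 2*(27/32)^2 + b^2 + c^2 - 1 - t := by nlinarith
  nlinarith [mul_nonneg h1 h2]

/-- For `ρ = 5/32`, `μ = 59`, the Jacobian `M(x,y)` of the symmetric Kopel map is
expanding (in the Euclidean norm) at every point of the closed disk of radius `1/5`
about the origin; equivalently, all eigenvalues of `M(x,y)ᵀ M(x,y)` exceed 1 there. -/
theorem symmetric_kopel_expanding_on_disk :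
    ∀ x y : ℝ, x ^ 2 + y ^ 2 ≤ 1 / 25 →
      ((∀ v : ℝ × ℝ, v ≠ 0 →
          Real.sqrt (v.1 ^ 2 + v.2 ^ 2) <
            Real.sqrt ((27 / 32 * v.1 + 295 / 32 * (1 - 2 * y) * v.2) ^ 2 +
              (295 / 32 * (1 - 2 * x) * v.1 + 27 / 32 * v.2) ^ 2)) ∧
        (∀ t ∈ spectrum ℝ
            ((!![(27 : ℝ) / 32, 295 / 32 * (1 - 2 * y);
                295 / 32 * (1 - 2 * x), 27 / 32] : Matrix (Fin 2) (Fin 2) ℝ)ᵀ *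
              (!![(27 : ℝ) / 32, 295 / 32 * (1 - 2 * y);
                295 / 32 * (1 - 2 * x), 27 / 32] : Matrix (Fin 2) (Fin 2) ℝ)),
          1 < t)) := by
  intro x y hxy
  have hx1 : -(1/5) ≤ x := by nlinarith [sq_nonneg y, sq_nonneg (x + 1/5)]
  have hx2 : x ≤ 1/5 := by nlinarith [sq_nonneg y, sq_nonneg (x - 1/5)]
  have hy1 : -(1/5) ≤ y := by nlinarith [sq_nonneg x, sq_nonneg (y + 1/5)]
  have hy2 : y ≤ 1/5 := by nlinarith [sq_nonneg x, sq_nonneg (y - 1/5)]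
  have hb1 : 177/32 ≤ 295 / 32 * (1 - 2 * y) := by linarith
  have hb2 : 295 / 32 * (1 - 2 * y) ≤ 413/32 := by linarith
  have hc1 : 177/32 ≤ 295 / 32 * (1 - 2 * x) := by linarith
  have hc2 : 295 / 32 * (1 - 2 * x) ≤ 413/32 := by linarith
  constructor
  · intro v hv
    have hv' : 0 < v.1^2 + v.2^2 := by
      have h : v.1 ≠ 0 ∨ v.2 ≠ 0 := by
        by_contra hc
        push_neg at hc
        exact hv (Prod.ext hc.1 hc.2)
      rcases h with h | h
      · have h1 : 0 < v.1 ^ 2 := by positivity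
        nlinarith [sq_nonneg v.2]
      · have h1 : 0 < v.2 ^ 2 := by positivity
        nlinarith [sq_nonneg v.1]
    exact Real.sqrt_lt_sqrt (by positivity)
      (kopel_quad _ _ v.1 v.2 hb1 hb2 hc1 hc2 hv')
  · intro t ht
    exact kopel_spec _ _ t hb1 hb2 hc1 hc2 ht
end

section
/- Let ρ = 5/32 and μ = 59, and let F be the corresponding symmetric Kopel map with Jacobian matrix M(x,y). Then there exists a point (x₀,y₀) ∈ ℝ² with (x₀,y₀) ≠ (0,0) and x₀² + y₀² ≤ 1/25 such that F(F(x₀,y₀)) = (0,0), the determinant of M at the point F(x₀,y₀) is nonzero, and the determinant of M at (0,0) is nonzero. -/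
/-!
On the diagonal the symmetric Kopel map acts as the one-dimensional map
`g t = (1 - ρ) t + ρ μ t (1 - t)`, whose nonzero root is `t₁ = 1 + (1 - ρ) / (ρ μ)`
(`= 322/295` here). Since `g` is continuous with `g 0 = 0` and `g (7/50) > t₁`, the
intermediate value theorem gives a small `t > 0` with `g t = t₁`, so `(t, t)` is mapped to
`(t₁, t₁)` and then to the origin. The Jacobian determinant is
`(1 - ρ)² - (ρ μ)² (1 - 2x) (1 - 2y)`, which is nonzero at both points.
-/

open Matrix

def kopelMap (ρ μ : ℝ) (p : ℝ × ℝ) : ℝ × ℝ :=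
  ((1 - ρ) * p.1 + ρ * μ * p.2 * (1 - p.2), (1 - ρ) * p.2 + ρ * μ * p.1 * (1 - p.1))

def kopelJacobian (ρ μ : ℝ) (p : ℝ × ℝ) : Matrix (Fin 2) (Fin 2) ℝ :=
  !![1 - ρ, ρ * μ * (1 - 2 * p.2); ρ * μ * (1 - 2 * p.1), 1 - ρ]

def kopelDiag (ρ μ t : ℝ) : ℝ := (1 - ρ) * t + ρ * μ * t * (1 - t)

section

variable (ρ μ : ℝ)

theorem kopelMap_diag (t : ℝ) :
    kopelMap ρ μ (t, t) = (kopelDiag ρ μ t, kopelDiag ρ μ t) :=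
  rfl

theorem det_kopelJacobian (p : ℝ × ℝ) :
    (kopelJacobian ρ μ p).det = (1 - ρ) ^ 2 - (ρ * μ) ^ 2 * (1 - 2 * p.1) * (1 - 2 * p.2) := by
  rw [kopelJacobian, det_fin_two_of]
  ring

theorem continuous_kopelDiag : Continuous (kopelDiag ρ μ) := by
  unfold kopelDiag
  fun_prop

theorem kopelDiag_zero : kopelDiag ρ μ 0 = 0 := by
  simp [kopelDiag]

theorem kopelDiag_one_add_div_eq_zero {ρ μ : ℝ} (h : ρ * μ ≠ 0) :
    kopelDiag ρ μ (1 + (1 - ρ) / (ρ * μ)) = 0 := by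
  obtain ⟨hρ, hμ⟩ := mul_ne_zero_iff.mp h
  rw [kopelDiag]
  field_simp
  ring

theorem exists_mem_Ioc_kopelDiag_eq {a c : ℝ} (ha : 0 ≤ a) (hc : 0 < c)
    (hca : c ≤ kopelDiag ρ μ a) : ∃ t ∈ Set.Ioc 0 a, kopelDiag ρ μ t = c := by
  have hc' : c ∈ Set.Icc (kopelDiag ρ μ 0) (kopelDiag ρ μ a) := by
    rw [kopelDiag_zero]
    exact ⟨hc.le, hca⟩
  obtain ⟨t, ⟨ht0, hta⟩, ht⟩ :=
    intermediate_value_Icc ha (continuous_kopelDiag ρ μ).continuousOn hc'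
  refine ⟨t, ⟨lt_of_le_of_ne ht0 ?_, hta⟩, ht⟩
  rintro rfl
  rw [kopelDiag_zero] at ht
  exact hc.ne ht

end

/-- For `ρ = 5/32`, `μ = 59`: there is a nonzero point `(x₀,y₀)` in the closed disk
of radius `1/5` about the origin with `F(F(x₀,y₀)) = (0,0)`, such that the Jacobian
determinant of the symmetric Kopel map is nonzero at `F(x₀,y₀)` and at `(0,0)`. -/
theorem symmetric_kopel_snapback_point
    (F : ℝ × ℝ → ℝ × ℝ)
    (hF : ∀ p : ℝ × ℝ, F p =
      (27 / 32 * p.1 + 295 / 32 * p.2 * (1 - p.2),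
       27 / 32 * p.2 + 295 / 32 * p.1 * (1 - p.1)))
    (M : ℝ × ℝ → Matrix (Fin 2) (Fin 2) ℝ)
    (hM : ∀ p : ℝ × ℝ, M p =
      !![(27 : ℝ) / 32, 295 / 32 * (1 - 2 * p.2);
         295 / 32 * (1 - 2 * p.1), 27 / 32]) :
    ∃ p : ℝ × ℝ, p ≠ (0, 0) ∧ p.1 ^ 2 + p.2 ^ 2 ≤ 1 / 25 ∧
      F (F p) = (0, 0) ∧ (M (F p)).det ≠ 0 ∧ (M (0, 0)).det ≠ 0 := by
  have hFK : F = kopelMap (5 / 32) 59 := funext fun p => by rw [hF, kopelMap]; norm_num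
  have hMK : M = kopelJacobian (5 / 32) 59 := funext fun p => by rw [hM, kopelJacobian]; norm_num
  subst hFK hMK
  set t₁ : ℝ := 1 + (1 - 5 / 32) / (5 / 32 * 59)
  obtain ⟨t, ⟨ht0, ht⟩, hgt⟩ :=
    exists_mem_Ioc_kopelDiag_eq (5 / 32) 59 (a := 7 / 50) (c := t₁) (by norm_num) (by norm_num)
      (by norm_num [t₁, kopelDiag])
  refine ⟨(t, t), fun h => ht0.ne' (congrArg Prod.fst h), by nlinarith, ?_, ?_, ?_⟩
  · rw [kopelMap_diag, hgt, kopelMap_diag, kopelDiag_one_add_div_eq_zero (by norm_num)]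
  · rw [kopelMap_diag, hgt, det_kopelJacobian]
    norm_num [t₁]
  · rw [det_kopelJacobian]
    norm_num
end

section
/- Let ρ = 5/32 and μ = 59, and let F be the corresponding symmetric Kopel map with Jacobian matrix M(x,y). Then the fixed point (0,0) is a 2-snapback repeller of F. Concretely: (i) for all u, v in the closed Euclidean ball B of radius 1/5 centered at the origin, ‖F(u) − F(v)‖ ≥ (75/16)·‖u − v‖, so F is expanding on B with expansion constant 75/16 > 1; and (ii) there exists (x₀,y₀) ∈ B with (x₀,y₀) ≠ (0,0), F(F(x₀,y₀)) = (0,0), and the determinant of M nonzero both at F(x₀,y₀) and at (0,0). -/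
open Matrix

lemma kopel_key_s18 (a b c d : ℝ) (hc1 : 177 ≤ c) (hd1 : 177 ≤ d) :
    22500*(a^2+b^2) ≤ (27*a+c*b)^2 + (27*b+d*a)^2 := by
  nlinarith [sq_nonneg (a+b), sq_nonneg (a-b), mul_nonneg (sub_nonneg.2 hc1) (sub_nonneg.2 hd1),
    mul_nonneg (sub_nonneg.2 hc1) (sq_nonneg b), mul_nonneg (sub_nonneg.2 hd1) (sq_nonneg a),
    mul_nonneg (sub_nonneg.2 hc1) (sq_nonneg (a+b)), mul_nonneg (sub_nonneg.2 hd1) (sq_nonneg (a+b)),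
    sq_nonneg ((c-177)*b - (d-177)*a), sq_nonneg (a*b),
    mul_nonneg (mul_nonneg (sub_nonneg.2 hc1) (sub_nonneg.2 hd1)) (sq_nonneg (a+b))]

lemma kopel_key2 (a b c d : ℝ) (hc1 : 177 ≤ c) (hd1 : 177 ≤ d) :
    ((75:ℝ)/16)^2*(a^2+b^2) ≤ ((27*a+c*b)/32)^2 + ((27*b+d*a)/32)^2 := by
  nlinarith [kopel_key_s18 a b c d hc1 hd1]

set_option maxHeartbeats 1200000

/-- For `ρ = 5/32`, `μ = 59`, the fixed point `(0,0)` is a 2-snapback repeller of the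
symmetric Kopel map `F`: (i) `F` expands Euclidean distances on the closed disk of
radius `1/5` about the origin by the factor `75/16 > 1`, and (ii) there is a nonzero
point `(x₀,y₀)` in this disk with `F(F(x₀,y₀)) = (0,0)` and nonsingular Jacobian of
`F` at `F(x₀,y₀)` and at `(0,0)`. -/
theorem symmetric_kopel_snapback_repeller
    (F : ℝ × ℝ → ℝ × ℝ)
    (hF : ∀ p : ℝ × ℝ, F p =
      (27 / 32 * p.1 + 295 / 32 * p.2 * (1 - p.2),
       27 / 32 * p.2 + 295 / 32 * p.1 * (1 - p.1)))
    (M : ℝ × ℝ → Matrix (Fin 2) (Fin 2) ℝ)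
    (hM : ∀ p : ℝ × ℝ, M p =
      !![(27 : ℝ) / 32, 295 / 32 * (1 - 2 * p.2);
         295 / 32 * (1 - 2 * p.1), 27 / 32]) :
    (∀ u v : ℝ × ℝ, Real.sqrt (u.1 ^ 2 + u.2 ^ 2) ≤ 1 / 5 →
        Real.sqrt (v.1 ^ 2 + v.2 ^ 2) ≤ 1 / 5 →
        75 / 16 * Real.sqrt ((u.1 - v.1) ^ 2 + (u.2 - v.2) ^ 2) ≤
          Real.sqrt (((F u).1 - (F v).1) ^ 2 + ((F u).2 - (F v).2) ^ 2)) ∧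
    (∃ p : ℝ × ℝ, p ≠ (0, 0) ∧ Real.sqrt (p.1 ^ 2 + p.2 ^ 2) ≤ 1 / 5 ∧
      F (F p) = (0, 0) ∧ (M (F p)).det ≠ 0 ∧ (M (0, 0)).det ≠ 0) := by
  constructor
  · intro u v hu hv
    -- squared norm bounds
    have hu0 : (0:ℝ) ≤ u.1 ^ 2 + u.2 ^ 2 := by positivity
    have hv0 : (0:ℝ) ≤ v.1 ^ 2 + v.2 ^ 2 := by positivity
    have hu2 : u.1 ^ 2 + u.2 ^ 2 ≤ 1/25 := by
      nlinarith [Real.sq_sqrt hu0, Real.sqrt_nonneg (u.1 ^ 2 + u.2 ^ 2)]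
    have hv2 : v.1 ^ 2 + v.2 ^ 2 ≤ 1/25 := by
      nlinarith [Real.sq_sqrt hv0, Real.sqrt_nonneg (v.1 ^ 2 + v.2 ^ 2)]
    have hu1 : -(1/5) ≤ u.1 ∧ u.1 ≤ 1/5 := by
      constructor <;> nlinarith [sq_nonneg u.2]
    have hu1' : -(1/5) ≤ u.2 ∧ u.2 ≤ 1/5 := by
      constructor <;> nlinarith [sq_nonneg u.1]
    have hv1 : -(1/5) ≤ v.1 ∧ v.1 ≤ 1/5 := by
      constructor <;> nlinarith [sq_nonneg v.2]
    have hv1' : -(1/5) ≤ v.2 ∧ v.2 ≤ 1/5 := by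
      constructor <;> nlinarith [sq_nonneg v.1]
    set a := u.1 - v.1 with ha
    set b := u.2 - v.2 with hb
    set c := 295 * (1 - (u.2 + v.2)) with hc
    set d := 295 * (1 - (u.1 + v.1)) with hd
    have hc1 : (177:ℝ) ≤ c := by rw [hc]; linarith [hu1'.2, hv1'.2]
    have hd1 : (177:ℝ) ≤ d := by rw [hd]; linarith [hu1.2, hv1.2]
    have h1 : (F u).1 - (F v).1 = (27*a + c*b)/32 := by
      rw [hF u, hF v]; simp only [ha, hb, hc]; ring
    have h2 : (F u).2 - (F v).2 = (27*b + d*a)/32 := by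
      rw [hF u, hF v]; simp only [ha, hb, hd]; ring
    have hlhs : (75:ℝ)/16 * Real.sqrt (a ^ 2 + b ^ 2)
        = Real.sqrt ((75/16)^2 * (a ^ 2 + b ^ 2)) := by
      rw [Real.sqrt_mul (by positivity), Real.sqrt_sq (by norm_num)]
    rw [h1, h2, hlhs]
    exact Real.sqrt_le_sqrt (kopel_key2 a b c d hc1 hd1)
  · -- snapback point
    set s := Real.sqrt 5436277700 with hs
    have hs2 : s ^ 2 = 5436277700 := Real.sq_sqrt (by norm_num)
    have hslb : (73234:ℝ) ≤ s := by
      rw [hs, show (73234:ℝ) = Real.sqrt (73234^2) by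
        rw [Real.sqrt_sq (by norm_num)]]
      exact Real.sqrt_le_sqrt (by norm_num)
    have hsub : s < 94990 := by
      rw [hs]
      have : Real.sqrt 5436277700 < Real.sqrt (94990^2) :=
        Real.sqrt_lt_sqrt (by norm_num) (by norm_num)
      rwa [Real.sqrt_sq (by norm_num)] at this
    set x : ℝ := (94990 - s) / 174050 with hx
    have hxpos' : 0 < x := by
      rw [hx]; apply div_pos <;> linarith
    have hxle : x ≤ 1/8 := by rw [hx]; rw [div_le_iff₀ (by norm_num)]; linarith
    have hq : 87025 * x^2 - 94990 * x + 10304 = 0 := by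
      rw [hx]; field_simp; nlinarith [hs2]
    refine ⟨(x, x), ?_, ?_, ?_, ?_, ?_⟩
    · intro h
      have h1 : x = 0 := congrArg Prod.fst h
      linarith
    · have h1 : x ^ 2 + x ^ 2 ≤ (1/5)^2 := by nlinarith
      calc Real.sqrt ((x, x).1 ^ 2 + (x, x).2 ^ 2) ≤ Real.sqrt ((1/5)^2) :=
            Real.sqrt_le_sqrt h1
        _ = 1/5 := Real.sqrt_sq (by norm_num)
    · have hFp : F (x, x) = (322/295, 322/295) := by
        rw [hF]
        have e : 27 / 32 * x + 295 / 32 * x * (1 - x) = 322/295 := by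
          linear_combination (-1/9440 : ℝ) * hq
        simp only [e]
      rw [hFp, hF]
      norm_num
    · have hFp : F (x, x) = (322/295, 322/295) := by
        rw [hF]
        have e : 27 / 32 * x + 295 / 32 * x * (1 - x) = 322/295 := by
          linear_combination (-1/9440 : ℝ) * hq
        simp only [e]
      rw [hFp, hM, Matrix.det_fin_two_of]
      norm_num
    · rw [hM, Matrix.det_fin_two_of]
      norm_num
end

section
/- Let F : ℝⁿ → ℝⁿ be continuously differentiable on a closed Euclidean ball B_r(x*) of radius r > 0 centered at a fixed point x* of F (i.e., F(x*) = x*). If every eigenvalue of (F′(x*))ᵀ·F′(x*) is strictly greater than 1 — equivalently, ‖F′(x*)·v‖₂ > ‖v‖₂ for every nonzero v ∈ ℝⁿ, where F′ denotes the Jacobian matrix — then there exist a constant s > 1 and a radius r′ ∈ (0, r] such that: (a) ‖F(x) − F(y)‖₂ > s·‖x − y‖₂ for all x, y ∈ B_{r′}(x*) with x ≠ y, and (b) every eigenvalue of (F′(x))ᵀ·F′(x) exceeds 1 for every x ∈ B_{r′}(x*). -/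
set_option maxHeartbeats 1000000 in
/-- Li–Chen lemma: let `F : ℝⁿ → ℝⁿ` be continuously differentiable on a closed
Euclidean ball `B_r(x*)` centered at a fixed point `x*` of `F` (with derivative `f'`,
continuous on the ball). If `‖f'(x*) v‖ > ‖v‖` for every nonzero `v` (equivalently,
all eigenvalues of `(F'(x*))ᵀ F'(x*)` exceed 1), then there exist `s > 1` and
`r' ∈ (0, r]` such that `‖F x − F y‖ > s ‖x − y‖` for all distinct `x, y` in
`B_{r'}(x*)`, and `‖f'(x) v‖ > ‖v‖` for every `x ∈ B_{r'}(x*)` and nonzero `v`. -/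
theorem li_chen_repelling_neighborhood (n : ℕ)
    (F : EuclideanSpace ℝ (Fin n) → EuclideanSpace ℝ (Fin n))
    (f' : EuclideanSpace ℝ (Fin n) →
      (EuclideanSpace ℝ (Fin n) →L[ℝ] EuclideanSpace ℝ (Fin n)))
    (xs : EuclideanSpace ℝ (Fin n)) (r : ℝ) (hr : 0 < r)
    (hfix : F xs = xs)
    (hderiv : ∀ x ∈ Metric.closedBall xs r, HasFDerivAt F (f' x) x)
    (hcont : ContinuousOn f' (Metric.closedBall xs r))
    (hexp : ∀ v : EuclideanSpace ℝ (Fin n), v ≠ 0 → ‖v‖ < ‖f' xs v‖) :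
    ∃ s : ℝ, 1 < s ∧ ∃ r' ∈ Set.Ioc (0 : ℝ) r,
      (∀ x ∈ Metric.closedBall xs r', ∀ y ∈ Metric.closedBall xs r', x ≠ y →
        s * ‖x - y‖ < ‖F x - F y‖) ∧
      (∀ x ∈ Metric.closedBall xs r', ∀ v : EuclideanSpace ℝ (Fin n), v ≠ 0 →
        ‖v‖ < ‖f' x v‖) := by
  -- Step 1: a lower contraction constant c > 1 for A := f' xs
  have key : ∃ c : ℝ, 1 < c ∧ ∀ v : EuclideanSpace ℝ (Fin n), c * ‖v‖ ≤ ‖f' xs v‖ := by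
    by_cases hn : ∃ v : EuclideanSpace ℝ (Fin n), v ≠ 0
    · obtain ⟨w, hw⟩ := hn
      have hsph : (Metric.sphere (0 : EuclideanSpace ℝ (Fin n)) 1).Nonempty :=
        ⟨‖w‖⁻¹ • w, by simp [norm_smul, norm_ne_zero_iff.mpr hw,
          inv_mul_cancel₀ (norm_ne_zero_iff.mpr hw)]⟩
      obtain ⟨v0, hv0, hmin⟩ := (isCompact_sphere (0 : EuclideanSpace ℝ (Fin n)) 1).exists_isMinOn
        hsph ((f' xs).continuous.norm.continuousOn)
      have hv0n : ‖v0‖ = 1 := by simpa using hv0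
      have hv0ne : v0 ≠ 0 := by
        intro h; rw [h] at hv0n; simp at hv0n
      refine ⟨‖f' xs v0‖, by simpa [hv0n] using hexp v0 hv0ne, fun v => ?_⟩
      rcases eq_or_ne v 0 with rfl | hv
      · simp
      · have hvn : ‖v‖ ≠ 0 := norm_ne_zero_iff.mpr hv
        have hu : (‖v‖⁻¹ • v) ∈ Metric.sphere (0 : EuclideanSpace ℝ (Fin n)) 1 := by
          simp [norm_smul, inv_mul_cancel₀ hvn, abs_of_nonneg (norm_nonneg v)]
        have h2 : ‖f' xs v0‖ ≤ ‖v‖⁻¹ * ‖f' xs v‖ := by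
          simpa [map_smul, norm_smul, abs_of_nonneg (norm_nonneg v)] using hmin hu
        have h3 := mul_le_mul_of_nonneg_left h2 (norm_nonneg v)
        calc ‖f' xs v0‖ * ‖v‖ = ‖v‖ * ‖f' xs v0‖ := mul_comm _ _
          _ ≤ ‖v‖ * (‖v‖⁻¹ * ‖f' xs v‖) := h3
          _ = ‖f' xs v‖ := by field_simp
    · push_neg at hn
      exact ⟨2, one_lt_two, fun v => by simp [hn v]⟩
  obtain ⟨c, hc1, hc⟩ := key
  set ε : ℝ := (c - 1) / 4 with hε
  have hεpos : 0 < ε := by rw [hε]; linarith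
  -- Step 2: continuity of f' at xs within the ball gives δ
  have hcx : ContinuousWithinAt f' (Metric.closedBall xs r) xs :=
    hcont xs (Metric.mem_closedBall_self hr.le)
  rw [Metric.continuousWithinAt_iff] at hcx
  obtain ⟨δ, hδpos, hδ⟩ := hcx ε hεpos
  set r' : ℝ := min (δ / 2) r with hr'
  have hr'pos : 0 < r' := lt_min (by positivity) hr
  have hr'le : r' ≤ r := min_le_right _ _
  have hsub : Metric.closedBall xs r' ⊆ Metric.closedBall xs r :=
    Metric.closedBall_subset_closedBall hr'le
  have hnear : ∀ x ∈ Metric.closedBall xs r', ‖f' x - f' xs‖ < ε := by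
    intro x hx
    have h1 : dist x xs < δ :=
      lt_of_le_of_lt (Metric.mem_closedBall.mp hx) (lt_of_le_of_lt (min_le_left _ _) (by linarith))
    have := hδ (hsub hx) h1
    rwa [dist_eq_norm] at this
  refine ⟨(c + 1) / 2, by linarith, r', ⟨hr'pos, hr'le⟩, ?_, ?_⟩
  · -- expansion of F
    intro x hx y hy hxy
    have hconv : Convex ℝ (Metric.closedBall xs r') := convex_closedBall _ _
    have hd : ∀ z ∈ Metric.closedBall xs r',
        HasFDerivWithinAt (fun w => F w - f' xs w) (f' z - f' xs) (Metric.closedBall xs r') z :=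
      fun z hz => ((hderiv z (hsub hz)).sub ((f' xs).hasFDerivAt)).hasFDerivWithinAt
    have hmvt : ‖(F y - f' xs y) - (F x - f' xs x)‖ ≤ ε * ‖y - x‖ :=
      hconv.norm_image_sub_le_of_norm_hasFDerivWithin_le hd
        (fun z hz => (hnear z hz).le) hx hy
    have hAxy : c * ‖x - y‖ ≤ ‖f' xs (x - y)‖ := hc _
    have hAxy' : ‖f' xs (x - y)‖ = ‖f' xs x - f' xs y‖ := by rw [map_sub]
    have hnorm : ‖f' xs x - f' xs y‖ - ‖(F x - f' xs x) - (F y - f' xs y)‖ ≤ ‖F x - F y‖ := by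
      have h := norm_sub_norm_le ((f' xs x - f' xs y)) ((f' xs x - f' xs y) - (F x - F y))
      have heq1 : (f' xs x - f' xs y) - ((f' xs x - f' xs y) - (F x - F y)) = F x - F y := by abel
      rw [heq1] at h
      have heq : (f' xs x - f' xs y) - (F x - F y) = -((F x - f' xs x) - (F y - f' xs y)) := by abel
      rw [heq, norm_neg] at h
      linarith
    have hxyne : 0 < ‖x - y‖ := by
      rw [norm_pos_iff]; exact sub_ne_zero_of_ne hxy
    have hmvt' : ‖(F x - f' xs x) - (F y - f' xs y)‖ ≤ ε * ‖x - y‖ := by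
      have heq : ‖(F x - f' xs x) - (F y - f' xs y)‖ = ‖(F y - f' xs y) - (F x - f' xs x)‖ := by
        rw [← norm_neg]; congr 1; abel
      rw [heq, norm_sub_rev x y]
      exact hmvt
    have hfin : (c - ε) * ‖x - y‖ ≤ ‖F x - F y‖ := by
      rw [← hAxy'] at hnorm
      nlinarith
    have hlt : (c + 1) / 2 < c - ε := by rw [hε]; linarith
    nlinarith
  · -- expansion of derivative on the ball
    intro x hx v hv
    have h1 : c * ‖v‖ ≤ ‖f' xs v‖ := hc v
    have h2 : ‖f' xs v - f' x v‖ ≤ ε * ‖v‖ := by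
      have heq : f' xs v - f' x v = -((f' x - f' xs) v) := by simp
      rw [heq, norm_neg]
      exact le_trans ((f' x - f' xs).le_opNorm v)
        (mul_le_mul_of_nonneg_right (hnear x hx).le (norm_nonneg v))
    have h3 : ‖f' xs v‖ - ‖f' xs v - f' x v‖ ≤ ‖f' x v‖ := by
      have h := norm_sub_norm_le (f' xs v) (f' xs v - f' x v)
      have he : f' xs v - (f' xs v - f' x v) = f' x v := by abel
      rwa [he] at h
    have hvpos : 0 < ‖v‖ := norm_pos_iff.mpr hv
    nlinarith
end
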